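/- arXiv:1806.08328 — 18 statements merged into one kernel-verified Lean document; each statement's English description precedes it below -/
import Mathlib

section
/- Let α and β be cardinals with 2 ≤ α and 2 ≤ β, and let P be a poset. Then P is (α,β)-representable if and only if for all p, q ∈ P with p ≰ q there exists an (α,β)-filter Γ of P with p ∈ Γ and q ∉ Γ. -/
open Cardinal

universe u

/-- A poset `P` is `(α,β)`-representable if there is a set `X` and a map `h : P → Set X`
which is an order-embedding, sends existing infima of sets of cardinality `< α` to
intersections, and existing suprema of sets of cardinality `< β` to unions. -/
def IsABRepresentable (α β : Cardinal.{u}) (P : Type u) [PartialOrder P] : Prop :=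
  ∃ (X : Type u) (h : P → Set X),
    (∀ p q : P, p ≤ q ↔ h p ⊆ h q) ∧
    (∀ (S : Set P) (m : P), #S < α → IsGLB S m → h m = ⋂ s ∈ S, h s) ∧
    (∀ (T : Set P) (j : P), #T < β → IsLUB T j → h j = ⋃ t ∈ T, h t)

/-- An `(α,β)`-filter of a poset `P`: an up-closed set `Γ` closed under existing infima of
subsets of `Γ` of cardinality `< α`, and such that an existing supremum of a set of
cardinality `< β` disjoint from `Γ` is not in `Γ`. -/
def IsABFilter (α β : Cardinal.{u}) {P : Type u} [PartialOrder P] (Γ : Set P) : Prop :=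
  (∀ x ∈ Γ, ∀ y, x ≤ y → y ∈ Γ) ∧
  (∀ (S : Set P) (m : P), S ⊆ Γ → #S < α → IsGLB S m → m ∈ Γ) ∧
  (∀ (T : Set P) (j : P), #T < β → IsLUB T j → T ∩ Γ = ∅ → j ∉ Γ)

theorem representable_iff_separating_filters (α β : Cardinal.{u}) (hα : 2 ≤ α) (hβ : 2 ≤ β)
    (P : Type u) [PartialOrder P] :
    IsABRepresentable α β P ↔
      ∀ p q : P, ¬p ≤ q → ∃ Γ : Set P, IsABFilter α β Γ ∧ p ∈ Γ ∧ q ∉ Γ := by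
  constructor
  · rintro ⟨X, h, hord, hinf, hsup⟩ p q hpq
    have hns : ¬ h p ⊆ h q := fun hs => hpq ((hord p q).2 hs)
    obtain ⟨x, hxp, hxq⟩ := Set.not_subset.1 hns
    refine ⟨{r | x ∈ h r}, ⟨?_, ?_, ?_⟩, hxp, hxq⟩
    · intro a ha y hay
      exact (hord a y).1 hay ha
    · intro S m hSΓ hS hglb
      have := hinf S m hS hglb
      simp only [Set.mem_setOf_eq, this, Set.mem_iInter]
      intro s hs; exact hSΓ hs
    · intro T j hT hlub hdisj hjΓ
      rw [Set.mem_setOf_eq, hsup T j hT hlub] at hjΓ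
      simp only [Set.mem_iUnion] at hjΓ
      obtain ⟨t, ht, hxt⟩ := hjΓ
      have : t ∈ T ∩ {r | x ∈ h r} := ⟨ht, hxt⟩
      rw [hdisj] at this; exact this
  · intro hsep
    refine ⟨{Γ : Set P // IsABFilter α β Γ}, fun p => {Γ | p ∈ Γ.1}, ?_, ?_, ?_⟩
    · intro p q
      constructor
      · intro hpq Γ hp
        exact Γ.2.1 p hp q hpq
      · intro hsub
        by_contra hpq
        obtain ⟨Γ, hΓ, hp, hq⟩ := hsep p q hpq
        exact hq (@hsub ⟨Γ, hΓ⟩ hp)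
    · intro S m hS hglb
      ext Γ
      simp only [Set.mem_setOf_eq, Set.mem_iInter]
      constructor
      · intro hm s hs
        exact Γ.2.1 m hm s (hglb.1 hs)
      · intro hall
        exact Γ.2.2.1 S m (fun s hs => hall s hs) hS hglb
    · intro T j hT hlub
      ext Γ
      simp only [Set.mem_setOf_eq, Set.mem_iUnion]
      constructor
      · intro hj
        by_contra hno
        push_neg at hno
        have hdisj : T ∩ Γ.1 = ∅ := by
          ext t; simp only [Set.mem_inter_iff, Set.mem_empty_iff_false, iff_false]
          rintro ⟨ht, htΓ⟩; exact hno t ht htΓ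
        exact Γ.2.2.2 T j hT hlub hdisj hj
      · rintro ⟨t, ht, htΓ⟩
        exact Γ.2.1 t htΓ j (hlub.1 ht)
end

section
/- Let α and β be cardinals with 2 ≤ α and 2 ≤ β, let I be an index set, and for each i ∈ I let P_i be an (α,β)-representable poset. Then the product poset ∏_{i∈I} P_i, with the pointwise order, is (α,β)-representable. -/
open Cardinal

universe u

lemma isGLB_pi_component {I : Type u} [DecidableEq I] {P : I → Type u} [∀ i, PartialOrder (P i)]
    {S : Set (∀ i, P i)} {m : ∀ i, P i} (hglb : IsGLB S m) (i : I) :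
    IsGLB ((fun p => p i) '' S) (m i) := by
  constructor
  · rintro _ ⟨p, hp, rfl⟩
    exact hglb.1 hp i
  · intro c hc
    have hlb : Function.update m i c ∈ lowerBounds S := by
      intro p hp j
      by_cases hj : j = i
      · subst hj; simpa using hc ⟨p, hp, rfl⟩
      · simpa [Function.update_of_ne hj] using hglb.1 hp j
    simpa using hglb.2 hlb i

lemma isLUB_pi_component {I : Type u} [DecidableEq I] {P : I → Type u} [∀ i, PartialOrder (P i)]
    {T : Set (∀ i, P i)} {j : ∀ i, P i} (hlub : IsLUB T j) (i : I) :
    IsLUB ((fun p => p i) '' T) (j i) := by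
  constructor
  · rintro _ ⟨p, hp, rfl⟩
    exact hlub.1 hp i
  · intro c hc
    have hub : Function.update j i c ∈ upperBounds T := by
      intro p hp k
      by_cases hk : k = i
      · subst hk; simpa using hc ⟨p, hp, rfl⟩
      · simpa [Function.update_of_ne hk] using hlub.1 hp k
    simpa using hlub.2 hub i

theorem representable_pi (α β : Cardinal.{u}) (hα : 2 ≤ α) (hβ : 2 ≤ β)
    (I : Type u) (P : I → Type u) [∀ i, PartialOrder (P i)]
    (h : ∀ i, IsABRepresentable α β (P i)) :
    IsABRepresentable α β (∀ i, P i) := by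
  classical
  choose X f hemb hinf hsup using h
  refine ⟨(Σ i, X i), fun p => {x | x.2 ∈ f x.1 (p x.1)}, ?_, ?_, ?_⟩
  · intro p q
    constructor
    · rintro hpq ⟨i, x⟩ hx
      exact (hemb i (p i) (q i)).1 (hpq i) hx
    · intro hsub i
      exact (hemb i (p i) (q i)).2 fun x hx => hsub (a := ⟨i, x⟩) hx
  · intro S m hS hglb
    ext ⟨i, x⟩
    have hcard : #((fun p => p i) '' S) < α := lt_of_le_of_lt Cardinal.mk_image_le hS
    have heq := hinf i _ _ hcard (isGLB_pi_component hglb i)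
    simp only [Set.mem_setOf_eq, heq, Set.mem_iInter, Set.mem_image,
      forall_exists_index, and_imp]
    constructor
    · intro hx p hp
      exact hx (p i) p hp rfl
    · rintro hx a p hp rfl
      exact hx p hp
  · intro T j hT hlub
    ext ⟨i, x⟩
    have hcard : #((fun p => p i) '' T) < β := lt_of_le_of_lt Cardinal.mk_image_le hT
    have heq := hsup i _ _ hcard (isLUB_pi_component hlub i)
    simp only [Set.mem_setOf_eq, heq, Set.mem_iUnion, Set.mem_image]
    constructor
    · rintro ⟨a, ⟨p, hp, rfl⟩, hx⟩
      exact ⟨p, hp, hx⟩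
    · rintro ⟨p, hp, hx⟩
      exact ⟨p i, ⟨p, hp, rfl⟩, hx⟩
end

section
/- Let α and β be cardinals with 2 ≤ α, β ≤ ℵ₀, let u be an ultrafilter on an index set I, and for each i ∈ I let P_i be an (α,β)-representable poset. Then the ultraproduct ∏_u P_i is (α,β)-representable. -/
open Cardinal

universe u

/-- The equivalence relation defining the ultraproduct `∏_U P i`:
`x ∼ y` iff `{i | x i = y i} ∈ U`. -/
def ultraSetoid {I : Type u} (U : Ultrafilter I) (P : I → Type u) : Setoid (∀ i, P i) where
  r x y := {i | x i = y i} ∈ (U : Filter I)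
  iseqv := by
    refine ⟨fun x => ?_, fun {x y} h => ?_, fun {x y z} h₁ h₂ => ?_⟩
    · have : {i | x i = x i} = Set.univ := by simp
      rw [this]; exact Filter.univ_mem
    · exact Filter.mem_of_superset h fun i hi => hi.symm
    · exact Filter.mem_of_superset (Filter.inter_mem h₁ h₂) fun i hi => hi.1.trans hi.2

/-- The ultraproduct of the family of posets `P i` over the ultrafilter `U`. -/
def UltraProduct {I : Type u} (U : Ultrafilter I) (P : I → Type u) : Type u :=
  Quotient (ultraSetoid U P)

instance UltraProduct.instPartialOrder {I : Type u} (U : Ultrafilter I) (P : I → Type u)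
    [∀ i, PartialOrder (P i)] : PartialOrder (UltraProduct U P) where
  le := Quotient.lift₂ (fun x y => {i | x i ≤ y i} ∈ (U : Filter I)) <| by
    intro x y x' y' hx hy
    apply propext
    constructor
    · intro h
      refine Filter.mem_of_superset (Filter.inter_mem (Filter.inter_mem hx hy) h) ?_
      intro i hi
      simp only [Set.mem_inter_iff, Set.mem_setOf_eq] at hi ⊢
      rw [← hi.1.1, ← hi.1.2]; exact hi.2
    · intro h
      refine Filter.mem_of_superset (Filter.inter_mem (Filter.inter_mem hx hy) h) ?_
      intro i hi
      simp only [Set.mem_inter_iff, Set.mem_setOf_eq] at hi ⊢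
      rw [hi.1.1, hi.1.2]; exact hi.2
  le_refl := by
    rintro ⟨x⟩
    show {i | x i ≤ x i} ∈ (U : Filter I)
    have : {i | x i ≤ x i} = Set.univ := by simp
    rw [this]; exact Filter.univ_mem
  le_trans := by
    rintro ⟨x⟩ ⟨y⟩ ⟨z⟩ h₁ h₂
    have h₁' : {i | x i ≤ y i} ∈ (U : Filter I) := h₁
    have h₂' : {i | y i ≤ z i} ∈ (U : Filter I) := h₂
    show {i | x i ≤ z i} ∈ (U : Filter I)
    exact Filter.mem_of_superset (Filter.inter_mem h₁' h₂') fun i hi => le_trans hi.1 hi.2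
  le_antisymm := by
    rintro ⟨x⟩ ⟨y⟩ h₁ h₂
    have h₁' : {i | x i ≤ y i} ∈ (U : Filter I) := h₁
    have h₂' : {i | y i ≤ x i} ∈ (U : Filter I) := h₂
    exact Quotient.sound (Filter.mem_of_superset (Filter.inter_mem h₁' h₂')
      fun i hi => le_antisymm hi.1 hi.2)

section UPAux

variable {I : Type u} {U : Ultrafilter I} {P : I → Type u}

/-- `mk` for the ultraproduct. -/
def UPmk (U : Ultrafilter I) (P : I → Type u) (a : ∀ i, P i) : UltraProduct U P :=
  Quotient.mk (ultraSetoid U P) a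

/-- A representative of an element of the ultraproduct. -/
noncomputable def UPrep (p : UltraProduct U P) : ∀ i, P i := Quotient.out p

lemma UPmk_rep (p : UltraProduct U P) : UPmk U P (UPrep p) = p := Quotient.out_eq p

lemma UPrep_mk (a : ∀ i, P i) :
    {i | UPrep (UPmk U P a) i = a i} ∈ (U : Filter I) :=
  Quotient.exact (Quotient.out_eq (UPmk U P a))

variable [∀ i, PartialOrder (P i)]

lemma UPmk_le_mk (a b : ∀ i, P i) :
    UPmk U P a ≤ UPmk U P b ↔ {i | a i ≤ b i} ∈ (U : Filter I) := Iff.rfl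

lemma UP_le_iff (p q : UltraProduct U P) :
    p ≤ q ↔ {i | UPrep p i ≤ UPrep q i} ∈ (U : Filter I) := by
  conv_lhs => rw [← UPmk_rep p, ← UPmk_rep q]
  exact Iff.rfl

end UPAux
section Transfer

variable {I : Type u} {U : Ultrafilter I} {P : I → Type u} [∀ i, PartialOrder (P i)]

lemma UP_glb_transfer {S : Set (UltraProduct U P)} (hS : S.Finite)
    {m : UltraProduct U P} (hm : IsGLB S m) :
    {i | IsGLB ((fun q => UPrep q i) '' S) (UPrep m i)} ∈ (U : Filter I) := by
  classical
  by_contra hA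
  replace hA := (Ultrafilter.compl_mem_iff_notMem (f := U)).2 hA
  set B : Set I := ⋃ s ∈ S, {i | ¬ UPrep m i ≤ UPrep s i} with hBdef
  set C : Set I := {i | ∃ l : P i, (∀ s ∈ S, l ≤ UPrep s i) ∧ ¬ l ≤ UPrep m i} with hCdef
  have hsub : {i | IsGLB ((fun q => UPrep q i) '' S) (UPrep m i)}ᶜ ⊆ B ∪ C := by
    intro i hi
    simp only [Set.mem_compl_iff, Set.mem_setOf_eq] at hi
    by_cases h1 : UPrep m i ∈ lowerBounds ((fun q => UPrep q i) '' S)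
    · right
      have h2 : ¬ ∀ l ∈ lowerBounds ((fun q => UPrep q i) '' S), l ≤ UPrep m i := by
        intro hc; exact hi ⟨h1, hc⟩
      push_neg at h2
      obtain ⟨l, hl1, hl2⟩ := h2
      exact ⟨l, fun s hs => hl1 ⟨s, hs, rfl⟩, hl2⟩
    · left
      simp only [lowerBounds, Set.mem_setOf_eq, not_forall] at h1
      obtain ⟨a, ⟨s, hs, rfl⟩, ha⟩ := h1
      exact Set.mem_biUnion hs ha
  have hBC : B ∪ C ∈ (U : Filter I) := Filter.mem_of_superset hA hsub
  rcases Ultrafilter.union_mem_iff.mp hBC with hB | hC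
  · obtain ⟨s, hs, hsB⟩ := (Ultrafilter.finite_biUnion_mem_iff hS).mp hB
    have hle : {i | UPrep m i ≤ UPrep s i} ∈ (U : Filter I) := (UP_le_iff m s).1 (hm.1 hs)
    obtain ⟨i, hi1, hi2⟩ := Filter.nonempty_of_mem (Filter.inter_mem hle hsB)
    exact hi2 hi1
  · have hCw : ∀ i, ∃ l : P i, i ∈ C → (∀ s ∈ S, l ≤ UPrep s i) ∧ ¬ l ≤ UPrep m i := by
      intro i
      by_cases hi : i ∈ C
      · obtain ⟨l, h1, h2⟩ := hi
        exact ⟨l, fun _ => ⟨h1, h2⟩⟩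
      · exact ⟨UPrep m i, fun h => absurd h hi⟩
    choose l hl using hCw
    have hlb : UPmk U P l ∈ lowerBounds S := by
      intro s hs
      rw [UP_le_iff]
      filter_upwards [UPrep_mk l, hC] with i he hi
      rw [he]
      exact (hl i hi).1 s hs
    have hlm : {i | UPrep (UPmk U P l) i ≤ UPrep m i} ∈ (U : Filter I) :=
      (UP_le_iff _ m).1 (hm.2 hlb)
    obtain ⟨i, hi1, hi2, hi3⟩ :=
      Filter.nonempty_of_mem (Filter.inter_mem hlm (Filter.inter_mem (UPrep_mk l) hC))
    simp only [Set.mem_setOf_eq] at hi1 hi2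
    rw [hi2] at hi1
    exact (hl i hi3).2 hi1

lemma UP_lub_transfer {T : Set (UltraProduct U P)} (hT : T.Finite)
    {j : UltraProduct U P} (hj : IsLUB T j) :
    {i | IsLUB ((fun q => UPrep q i) '' T) (UPrep j i)} ∈ (U : Filter I) := by
  classical
  by_contra hA
  replace hA := (Ultrafilter.compl_mem_iff_notMem (f := U)).2 hA
  set B : Set I := ⋃ s ∈ T, {i | ¬ UPrep s i ≤ UPrep j i} with hBdef
  set C : Set I := {i | ∃ l : P i, (∀ s ∈ T, UPrep s i ≤ l) ∧ ¬ UPrep j i ≤ l} with hCdef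
  have hsub : {i | IsLUB ((fun q => UPrep q i) '' T) (UPrep j i)}ᶜ ⊆ B ∪ C := by
    intro i hi
    simp only [Set.mem_compl_iff, Set.mem_setOf_eq] at hi
    by_cases h1 : UPrep j i ∈ upperBounds ((fun q => UPrep q i) '' T)
    · right
      have h2 : ¬ ∀ l ∈ upperBounds ((fun q => UPrep q i) '' T), UPrep j i ≤ l := by
        intro hc; exact hi ⟨h1, hc⟩
      push_neg at h2
      obtain ⟨l, hl1, hl2⟩ := h2
      exact ⟨l, fun s hs => hl1 ⟨s, hs, rfl⟩, hl2⟩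
    · left
      simp only [upperBounds, Set.mem_setOf_eq, not_forall] at h1
      obtain ⟨a, ⟨s, hs, rfl⟩, ha⟩ := h1
      exact Set.mem_biUnion hs ha
  have hBC : B ∪ C ∈ (U : Filter I) := Filter.mem_of_superset hA hsub
  rcases Ultrafilter.union_mem_iff.mp hBC with hB | hC
  · obtain ⟨s, hs, hsB⟩ := (Ultrafilter.finite_biUnion_mem_iff hT).mp hB
    have hle : {i | UPrep s i ≤ UPrep j i} ∈ (U : Filter I) := (UP_le_iff s j).1 (hj.1 hs)
    obtain ⟨i, hi1, hi2⟩ := Filter.nonempty_of_mem (Filter.inter_mem hle hsB)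
    exact hi2 hi1
  · have hCw : ∀ i, ∃ l : P i, i ∈ C → (∀ s ∈ T, UPrep s i ≤ l) ∧ ¬ UPrep j i ≤ l := by
      intro i
      by_cases hi : i ∈ C
      · obtain ⟨l, h1, h2⟩ := hi
        exact ⟨l, fun _ => ⟨h1, h2⟩⟩
      · exact ⟨UPrep j i, fun h => absurd h hi⟩
    choose l hl using hCw
    have hlb : UPmk U P l ∈ upperBounds T := by
      intro s hs
      rw [UP_le_iff]
      filter_upwards [UPrep_mk l, hC] with i he hi
      rw [he]
      exact (hl i hi).1 s hs
    have hlm : {i | UPrep j i ≤ UPrep (UPmk U P l) i} ∈ (U : Filter I) :=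
      (UP_le_iff j _).1 (hj.2 hlb)
    obtain ⟨i, hi1, hi2, hi3⟩ :=
      Filter.nonempty_of_mem (Filter.inter_mem hlm (Filter.inter_mem (UPrep_mk l) hC))
    simp only [Set.mem_setOf_eq] at hi1 hi2
    rw [hi2] at hi1
    exact (hl i hi3).2 hi1

end Transfer
theorem representable_ultraproduct (α β : Cardinal.{u})
    (hα2 : 2 ≤ α) (hαω : α ≤ ℵ₀) (hβ2 : 2 ≤ β) (hβω : β ≤ ℵ₀)
    (I : Type u) (U : Ultrafilter I) (P : I → Type u) [∀ i, PartialOrder (P i)]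
    (h : ∀ i, IsABRepresentable α β (P i)) :
    IsABRepresentable α β (UltraProduct U P) := by
  classical
  by_cases hsub : ∀ a b : UltraProduct U P, a = b
  · -- degenerate case: the ultraproduct is a subsingleton
    refine ⟨PEmpty.{u+1}, fun _ => ∅, ?_, ?_, ?_⟩
    · intro p q
      exact ⟨fun _ => le_refl _, fun _ => le_of_eq (hsub p q)⟩
    · intro S m _ _
      ext x; exact x.elim
    · intro T j _ _
      ext x; exact x.elim
  · push_neg at hsub
    obtain ⟨a, b, hab⟩ := hsub
    choose X g emb infs sups using h
    -- the set of indices where the ultraproduct "sees" two distinct elements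
    set N : Set I := {i | UPrep a i ≠ UPrep b i} with hNdef
    have hN : N ∈ (U : Filter I) := by
      have hne : {i | UPrep a i = UPrep b i} ∉ (U : Filter I) := by
        intro hc
        exact hab (by rw [← UPmk_rep a, ← UPmk_rep b]; exact Quotient.sound hc)
      exact (Ultrafilter.compl_mem_iff_notMem (f := U)).2 hne
    have hNE : ∀ i ∈ N, Nonempty (X i) := by
      intro i hi
      have h2 : ¬ (UPrep a i ≤ UPrep b i) ∨ ¬ (UPrep b i ≤ UPrep a i) := by
        by_contra hc
        push_neg at hc
        exact hi (le_antisymm hc.1 hc.2)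
      rcases h2 with h2 | h2
      · obtain ⟨x, -, -⟩ := Set.not_subset.1 (fun hc => h2 ((emb i _ _).2 hc))
        exact ⟨x⟩
      · obtain ⟨x, -, -⟩ := Set.not_subset.1 (fun hc => h2 ((emb i _ _).2 hc))
        exact ⟨x⟩
    -- a default point of `X i` for each `i ∈ N`
    have d : ∀ i, i ∈ N → X i := fun i hi => (hNE i hi).some
    set Q : I → Type u := fun i => Option (X i) with hQdef
    set φ : ∀ i, Q i → P i → Prop := fun i o p => ∀ hi : i ∈ N, o.getD (d i hi) ∈ g i p
      with hφdef
    set H : UltraProduct U P → Set (UltraProduct U Q) :=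
      fun p => {x | {i | φ i (UPrep x i) (UPrep p i)} ∈ (U : Filter I)} with hHdef
    have hmem : ∀ p x, x ∈ H p ↔ {i | φ i (UPrep x i) (UPrep p i)} ∈ (U : Filter I) :=
      fun p x => Iff.rfl
    refine ⟨UltraProduct U Q, H, ?_, ?_, ?_⟩
    · -- order embedding
      intro p q
      constructor
      · intro hpq x hx
        rw [hmem] at hx ⊢
        filter_upwards [hx, (UP_le_iff p q).1 hpq] with i h1 h2 hi
        exact (emb i _ _).1 h2 (h1 hi)
      · intro hss
        by_contra hle
        have hBc : {i | ¬ UPrep p i ≤ UPrep q i} ∈ (U : Filter I) := by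
          rw [UP_le_iff] at hle
          exact (Ultrafilter.compl_mem_iff_notMem (f := U)).2 hle
        have hw : ∀ i, ∃ o : Q i,
            ¬ UPrep p i ≤ UPrep q i →
              ∃ w : X i, o = some w ∧ w ∈ g i (UPrep p i) ∧ w ∉ g i (UPrep q i) := by
          intro i
          by_cases hi : UPrep p i ≤ UPrep q i
          · exact ⟨none, fun hc => absurd hi hc⟩
          · obtain ⟨w, hw1, hw2⟩ := Set.not_subset.1 (fun hc => hi ((emb i _ _).2 hc))
            exact ⟨some w, fun _ => ⟨w, rfl, hw1, hw2⟩⟩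
        choose f hf using hw
        have hE : {i | UPrep (UPmk U Q f) i = f i} ∈ (U : Filter I) := UPrep_mk f
        have hxp : UPmk U Q f ∈ H p := by
          rw [hmem]
          filter_upwards [hBc, hE] with i h1 h2 hi
          obtain ⟨w, hw0, hw1, -⟩ := hf i h1
          rw [h2, hw0]
          exact hw1
        have hxq := hss hxp
        rw [hmem] at hxq
        obtain ⟨i, hi1, hi2, hi3, hi4⟩ := Filter.nonempty_of_mem
          (Filter.inter_mem hxq (Filter.inter_mem hBc (Filter.inter_mem hE hN)))
        obtain ⟨w, hw0, -, hw2⟩ := hf i hi2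
        have := hi1 hi4
        rw [hi3, hw0] at this
        exact hw2 this
    · -- infima
      intro S m hcard hglb
      have hfin : S.Finite := Cardinal.lt_aleph0_iff_set_finite.1 (lt_of_lt_of_le hcard hαω)
      have hA := UP_glb_transfer hfin hglb
      have hcard' : ∀ i, #((fun q => UPrep q i) '' S) < α :=
        fun i => lt_of_le_of_lt Cardinal.mk_image_le hcard
      ext x
      simp only [Set.mem_iInter]
      rw [hmem]
      constructor
      · intro hx s hs
        rw [hmem]
        filter_upwards [hx, hA] with i h1 h2 hi
        have h3 := h1 hi
        rw [infs i _ _ (hcard' i) h2] at h3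
        exact Set.mem_iInter₂.mp h3 (UPrep s i) ⟨s, hs, rfl⟩
      · intro hx
        have hDs : (⋂ s ∈ S, {i | φ i (UPrep x i) (UPrep s i)}) ∈ (U : Filter I) :=
          (Filter.biInter_mem hfin).2 fun s hs => (hmem s x).1 (hx s hs)
        filter_upwards [hDs, hA] with i h1 h2 hi
        rw [infs i _ _ (hcard' i) h2]
        refine Set.mem_iInter₂.2 ?_
        rintro c ⟨s, hs, rfl⟩
        exact Set.mem_iInter₂.mp h1 s hs hi
    · -- suprema
      intro T j hcard hlub
      have hfin : T.Finite := Cardinal.lt_aleph0_iff_set_finite.1 (lt_of_lt_of_le hcard hβω)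
      have hA := UP_lub_transfer hfin hlub
      have hcard' : ∀ i, #((fun q => UPrep q i) '' T) < β :=
        fun i => lt_of_le_of_lt Cardinal.mk_image_le hcard
      ext x
      simp only [Set.mem_iUnion]
      rw [hmem]
      constructor
      · intro hx
        have key : (⋃ t ∈ T, {i | φ i (UPrep x i) (UPrep t i)}) ∈ (U : Filter I) := by
          refine Filter.mem_of_superset
            (Filter.inter_mem hx (Filter.inter_mem hA hN)) ?_
          rintro i ⟨h1, h2, hi⟩
          have h3 := h1 hi
          rw [sups i _ _ (hcard' i) h2] at h3
          obtain ⟨c, ⟨t, ht, rfl⟩, hc⟩ := Set.mem_iUnion₂.mp h3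
          exact Set.mem_biUnion ht fun _ => hc
        obtain ⟨t, ht, hmt⟩ := (Ultrafilter.finite_biUnion_mem_iff hfin).mp key
        exact ⟨t, ht, (hmem t x).2 hmt⟩
      · rintro ⟨t, ht, hx⟩
        rw [hmem] at hx
        filter_upwards [hx, hA] with i h1 h2 hi
        rw [sups i _ _ (hcard' i) h2]
        exact Set.mem_iUnion₂.2 ⟨UPrep t i, ⟨t, ht, rfl⟩, h1 hi⟩
end

section
/- Let α and β be cardinals with 2 ≤ α, β ≤ ℵ₀, let P be a poset, and let u be an ultrafilter on an index set I. If the ultrapower ∏_u P (the ultraproduct of the constant family P_i = P) is (α,β)-representable, then P is (α,β)-representable. -/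
open Cardinal

universe u

theorem representable_of_ultrapower (α β : Cardinal.{u})
    (hα2 : 2 ≤ α) (hαω : α ≤ ℵ₀) (hβ2 : 2 ≤ β) (hβω : β ≤ ℵ₀)
    (P : Type u) [PartialOrder P] (I : Type u) (U : Ultrafilter I)
    (h : IsABRepresentable α β (UltraProduct U fun _ : I => P)) :
    IsABRepresentable α β P := by
  obtain ⟨X, g, hemb, hinf, hsup⟩ := h
  set d : P → UltraProduct U (fun _ : I => P) :=
    fun p => Quotient.mk (ultraSetoid U (fun _ : I => P)) (fun _ => p) with hd
  have hle : ∀ p q : P, d p ≤ d q ↔ p ≤ q := by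
    intro p q
    have : d p ≤ d q ↔ {i : I | p ≤ q} ∈ (U : Filter I) := Iff.rfl
    rw [this]
    constructor
    · intro hm
      by_contra hpq
      have : {i : I | p ≤ q} = (∅ : Set I) := by
        ext i; simp [hpq]
      rw [this] at hm
      exact Filter.empty_notMem _ hm
    · intro hpq
      have : {i : I | p ≤ q} = Set.univ := by ext i; simp [hpq]
      rw [this]; exact Filter.univ_mem
  refine ⟨X, fun p => g (d p), ?_, ?_, ?_⟩
  · intro p q
    rw [← hle, hemb]
  · intro S m hS hglb
    have hSfin : S.Finite := by
      rw [← Cardinal.lt_aleph0_iff_set_finite]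
      exact lt_of_lt_of_le hS hαω
    have hglb' : IsGLB (d '' S) (d m) := by
      constructor
      · rintro x ⟨s, hs, rfl⟩
        exact (hle m s).mpr (hglb.1 hs)
      · intro q hq
        induction q using Quotient.inductionOn with
        | h x =>
          have hmem : ∀ s ∈ S, {i : I | x i ≤ s} ∈ (U : Filter I) := by
            intro s hs
            exact hq ⟨s, hs, rfl⟩
          have hint : (⋂ s ∈ S, {i : I | x i ≤ s}) ∈ (U : Filter I) :=
            (Filter.biInter_mem hSfin).mpr hmem
          show {i : I | x i ≤ m} ∈ (U : Filter I)
          refine Filter.mem_of_superset hint ?_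
          intro i hi
          simp only [Set.mem_iInter, Set.mem_setOf_eq] at hi ⊢
          exact hglb.2 fun s hs => hi s hs
    have := hinf (d '' S) (d m) (lt_of_le_of_lt Cardinal.mk_image_le hS) hglb'
    show g (d m) = ⋂ s ∈ S, g (d s)
    rw [this, Set.biInter_image]
  · intro T j hT hlub
    have hTfin : T.Finite := by
      rw [← Cardinal.lt_aleph0_iff_set_finite]
      exact lt_of_lt_of_le hT hβω
    have hlub' : IsLUB (d '' T) (d j) := by
      constructor
      · rintro x ⟨t, ht, rfl⟩
        exact (hle t j).mpr (hlub.1 ht)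
      · intro q hq
        induction q using Quotient.inductionOn with
        | h x =>
          have hmem : ∀ t ∈ T, {i : I | t ≤ x i} ∈ (U : Filter I) := by
            intro t ht
            exact hq ⟨t, ht, rfl⟩
          have hint : (⋂ t ∈ T, {i : I | t ≤ x i}) ∈ (U : Filter I) :=
            (Filter.biInter_mem hTfin).mpr hmem
          show {i : I | j ≤ x i} ∈ (U : Filter I)
          refine Filter.mem_of_superset hint ?_
          intro i hi
          simp only [Set.mem_iInter, Set.mem_setOf_eq] at hi ⊢
          exact hlub.2 fun t ht => hi t ht
    have := hsup (d '' T) (d j) (lt_of_le_of_lt Cardinal.mk_image_le hT) hlub'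
    show g (d j) = ⋃ t ∈ T, g (d t)
    rw [this, Set.biUnion_image]
end

section
/- For all cardinals α, β with 2 ≤ α, β ≤ ℵ₀, the class of (α,β)-representable posets is elementary: there exists a set T of sentences of the first-order language of orders such that for every poset P (regarded as a structure for this language, interpreting the relation symbol as its order), P is a model of T if and only if P is (α,β)-representable. -/
/-! The theory is the set of all sentences true in every `(α,β)`-representable poset.
A poset is `(α,β)`-representable iff any `p ≰ q` are separated by a filter closed under the
existing meets of fewer than `α` elements and prime for the existing joins of fewer than `β`
elements. As `α, β ≤ ℵ₀`, these are clauses in finitely many elements each, so by compactness of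
`M → Bool` it suffices to separate `p` and `q` by a set satisfying finitely many of them. The
finitely many order facts behind those clauses, together with `p ≰ q`, form a formula with
parameters in `M`; its existential closure holds in `M`, hence in some representable poset, and a
separating filter there pulls back to the required set. -/

open Cardinal

universe u

structure IsABFilter_s4 (α β : Cardinal.{u}) {P : Type u} [Preorder P] (F : Set P) : Prop where
  mem_of_le {a b : P} : a ∈ F → a ≤ b → b ∈ F
  mem_of_isGLB {S : Set P} {m : P} : #S < α → IsGLB S m → S ⊆ F → m ∈ F
  exists_mem_of_isLUB {T : Set P} {j : P} : #T < β → IsLUB T j → j ∈ F → ∃ t ∈ T, t ∈ F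

section Filters

variable {α β : Cardinal.{u}} {P : Type u} [PartialOrder P]

theorem IsABRepresentable.exists_isABFilter (hP : IsABRepresentable α β P) {p q : P}
    (hpq : ¬p ≤ q) : ∃ F : Set P, IsABFilter_s4 α β F ∧ p ∈ F ∧ q ∉ F := by
  obtain ⟨X, h, hle, hglb, hlub⟩ := hP
  obtain ⟨x, hxp, hxq⟩ := Set.not_subset.1 fun hsub => hpq ((hle p q).2 hsub)
  refine ⟨{r | x ∈ h r}, ⟨fun ha hab => (hle _ _).1 hab ha, fun hS hm hSF => ?_,
    fun hT hj hjF => ?_⟩, hxp, hxq⟩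
  · rw [Set.mem_ofPred_eq, hglb _ _ hS hm, Set.mem_iInter₂]
    exact hSF
  · rw [Set.mem_ofPred_eq, hlub _ _ hT hj, Set.mem_iUnion₂] at hjF
    simpa using hjF

theorem isABRepresentable_of_exists_isABFilter
    (h : ∀ p q : P, ¬p ≤ q → ∃ F : Set P, IsABFilter_s4 α β F ∧ p ∈ F ∧ q ∉ F) :
    IsABRepresentable α β P := by
  refine ⟨{F : Set P // IsABFilter_s4 α β F}, fun p => {F | p ∈ F.1}, fun p q => ⟨?_, ?_⟩,
    fun S m hS hglb => ?_, fun T j hT hj => ?_⟩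
  · exact fun hpq F hp => F.2.mem_of_le hp hpq
  · intro hsub
    by_contra hpq
    obtain ⟨F, hF, hp, hq⟩ := h p q hpq
    exact hq (hsub (a := ⟨F, hF⟩) hp)
  · ext F
    simp only [Set.mem_ofPred_eq, Set.mem_iInter]
    exact ⟨fun hm s hs => F.2.mem_of_le hm (hglb.1 hs), F.2.mem_of_isGLB hS hglb⟩
  · ext F
    simp only [Set.mem_ofPred_eq, Set.mem_iUnion, exists_prop]
    exact ⟨F.2.exists_mem_of_isLUB hT hj, fun ⟨t, ht, htF⟩ => F.2.mem_of_le htF (hj.1 ht)⟩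

end Filters

theorem exists_finset_coe_eq_of_mk_lt {M : Type u} {γ : Cardinal.{u}} (hγ : γ ≤ ℵ₀) {S : Set M}
    (hS : #S < γ) :
    ∃ S' : Finset M, (S' : Set M) = S ∧ (S'.card : Cardinal) < γ := by
  have hfin : S.Finite := lt_aleph0_iff_set_finite.1 (hS.trans_le hγ)
  exact ⟨hfin.toFinset, hfin.coe_toFinset, by
    rwa [← mk_coe_finset, mk_congr (Equiv.subtypeEquivRight fun _ => hfin.mem_toFinset)]⟩

namespace FirstOrder.Language

variable {L : Language} {α : Type*} {N : Type*} [L.Structure N]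

theorem Formula.realize_exClosure_iff [DecidableEq α] [Nonempty N] (φ : L.Formula α) :
    φ.exClosure.Realize N ↔ ∃ v : α → N, φ.Realize v := by
  rw [Formula.realize_exClosure]
  constructor
  · rintro ⟨w, hw⟩
    refine ⟨fun a => if ha : a ∈ φ.freeVarFinset then w ⟨a, ha⟩ else Classical.arbitrary N, ?_⟩
    exact (BoundedFormula.realize_restrictFreeVar _ (by simp)).1 hw
  · rintro ⟨v, hv⟩
    exact ⟨fun a => v a, (BoundedFormula.realize_restrictFreeVar (f := id) v fun _ => rfl).2 hv⟩

instance orderedStructure_orderStructure (P : Type*) [LE P] :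
    @OrderedStructure Language.order P _ _ (orderStructure P) :=
  @OrderedStructure.mk Language.order P _ _ (orderStructure P) fun _ => Iff.rfl

variable [L.IsOrdered]

namespace Formula

def le (a b : α) : L.Formula α :=
  Term.le (Term.var (Sum.inl a)) (Term.var (Sum.inl b))

noncomputable def isGLB (S : Finset α) (m : α) : L.Formula α :=
  BoundedFormula.iInf (fun x : S => le m x) ⊓
    ∀' (BoundedFormula.iInf (fun x : S => Term.le (&0) (Term.var (Sum.inl x.1)))
      ⟹ Term.le (&0) (Term.var (Sum.inl m)))

noncomputable def isLUB (S : Finset α) (j : α) : L.Formula α :=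
  BoundedFormula.iInf (fun x : S => le x j) ⊓
    ∀' (BoundedFormula.iInf (fun x : S => Term.le (Term.var (Sum.inl x.1)) (&0))
      ⟹ Term.le (Term.var (Sum.inl j)) (&0))

variable [Preorder N] [L.OrderedStructure N]

@[simp]
theorem realize_le (a b : α) (v : α → N) : (le a b : L.Formula α).Realize v ↔ v a ≤ v b := by
  simp [le, Formula.Realize]

theorem realize_isGLB (S : Finset α) (m : α) (v : α → N) :
    (isGLB S m : L.Formula α).Realize v ↔ IsGLB (v '' S) (v m) := by
  simp [isGLB, Formula.Realize, le, IsGLB, IsGreatest, lowerBounds, upperBounds, Fin.snoc]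

theorem realize_isLUB (S : Finset α) (j : α) (v : α → N) :
    (isLUB S j : L.Formula α).Realize v ↔ IsLUB (v '' S) (v j) := by
  simp [isLUB, Formula.Realize, le, IsLUB, IsLeast, lowerBounds, upperBounds, Fin.snoc]

end Formula

end FirstOrder.Language

namespace IsABRepresentable

structure Clause (M : Type*) where
  neg : Finset M
  pos : Finset M

namespace Clause

variable {M ι : Type*}

def Sat (c : Clause M) (F : Set M) : Prop :=
  (∀ x ∈ c.neg, x ∈ F) → ∃ y ∈ c.pos, y ∈ F

theorem isClosed_setOf_sat (c : Clause M) : IsClosed {f : M → Bool | c.Sat {x | f x}} := by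
  have : {f : M → Bool | c.Sat {x | f x}} =
      (⋃ x ∈ c.neg, {f | f x = false}) ∪ ⋃ y ∈ c.pos, {f | f y = true} := by
    ext f
    simp [Sat, imp_iff_not_or]
  rw [this]
  exact (isClosed_biUnion_finset fun x _ => isClosed_eq (continuous_apply x) continuous_const).union
    (isClosed_biUnion_finset fun y _ => isClosed_eq (continuous_apply y) continuous_const)

theorem exists_separating_sat (c : ι → Clause M) (p q : M)
    (h : ∀ u : Finset ι, ∃ F : Set M, p ∈ F ∧ q ∉ F ∧ ∀ i ∈ u, (c i).Sat F) :
    ∃ F : Set M, p ∈ F ∧ q ∉ F ∧ ∀ i, (c i).Sat F := by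
  classical
  have hK : IsCompact {f : M → Bool | f p = true ∧ f q = false} :=
    ((isClosed_eq (continuous_apply p) continuous_const).inter
      (isClosed_eq (continuous_apply q) continuous_const)).isCompact
  obtain ⟨f, ⟨hp, hq⟩, hf⟩ := hK.inter_iInter_nonempty (fun i => {f | (c i).Sat {x | f x}})
    (fun i => (c i).isClosed_setOf_sat) fun u => by
      obtain ⟨F, hp, hq, hF⟩ := h u
      exact ⟨fun x => decide (x ∈ F), by simpa [hp] using hq, by simpa using hF⟩
  exact ⟨{x | f x}, hp, by simp [hq], by simpa using hf⟩

end Clause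

/-- An order fact about finitely many elements, and (`clause`) the condition it imposes on
`(α,β)`-filters. -/
inductive Requirement (M : Type*)
  | le (a b : M)
  | glb (S : Finset M) (m : M)
  | lub (S : Finset M) (j : M)

namespace Requirement

variable {M : Type u}

def Admissible (α β : Cardinal.{u}) : Requirement M → Prop
  | le _ _ => True
  | glb S _ => S.card < α
  | lub S _ => S.card < β

def Holds {P : Type*} [Preorder P] (v : M → P) : Requirement M → Prop
  | le a b => v a ≤ v b
  | glb S m => IsGLB (v '' S) (v m)
  | lub S j => IsLUB (v '' S) (v j)

def clause : Requirement M → Clause M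
  | le a b => ⟨{a}, {b}⟩
  | glb S m => ⟨S, {m}⟩
  | lub S j => ⟨{j}, S⟩

open FirstOrder Language in
noncomputable def formula {L : Language} [L.IsOrdered] : Requirement M → L.Formula M
  | le a b => Formula.le a b
  | glb S m => Formula.isGLB S m
  | lub S j => Formula.isLUB S j

open FirstOrder Language in
theorem realize_formula {L : Language} [L.IsOrdered] {P : Type*} [Preorder P] [L.Structure P]
    [L.OrderedStructure P] (r : Requirement M) (v : M → P) :
    (r.formula : L.Formula M).Realize v ↔ r.Holds v := by
  cases r <;> simp [formula, Holds, Formula.realize_isGLB, Formula.realize_isLUB]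

theorem sat_preimage {α β : Cardinal.{u}} {P : Type u} [Preorder P] {F : Set P}
    (hF : IsABFilter_s4 α β F) {r : Requirement M} (hr : r.Admissible α β) {v : M → P}
    (hv : r.Holds v) : r.clause.Sat (v ⁻¹' F) := by
  have mk_image_lt {γ : Cardinal.{u}} {S : Finset M} (hS : (S.card : Cardinal) < γ) :
      #(v '' S) < γ := mk_image_le.trans_lt (mk_coe_finset.trans_lt hS)
  cases r with
  | le a b => simpa [clause, Clause.Sat] using fun ha => hF.mem_of_le ha hv
  | glb S m =>
    simpa [clause, Clause.Sat] using
      fun hS => hF.mem_of_isGLB (mk_image_lt hr) hv (Set.image_subset_iff.2 fun x hx => hS x hx)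
  | lub S j => simpa [clause, Clause.Sat] using hF.exists_mem_of_isLUB (mk_image_lt hr) hv

theorem isABFilter_of_forall_sat {α β : Cardinal.{u}} (hα : α ≤ ℵ₀) (hβ : β ≤ ℵ₀)
    [Preorder M] {F : Set M}
    (h : ∀ r : Requirement M, r.Admissible α β → r.Holds id → r.clause.Sat F) :
    IsABFilter_s4 α β F where
  mem_of_le {a b} ha hab := by simpa [clause, Clause.Sat, ha] using h (le a b) trivial hab
  mem_of_isGLB {S m} hS hglb hSF := by
    obtain ⟨S, rfl, hcard⟩ := exists_finset_coe_eq_of_mk_lt hα hS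
    simpa [clause, Clause.Sat] using h (glb S m) hcard (by simpa [Holds] using hglb) hSF
  exists_mem_of_isLUB {T j} hT hlub hj := by
    obtain ⟨T, rfl, hcard⟩ := exists_finset_coe_eq_of_mk_lt hβ hT
    simpa [clause, Clause.Sat, hj] using h (lub T j) hcard (by simpa [Holds] using hlub)

end Requirement

open FirstOrder Language

attribute [local instance] orderStructure

def theory (α β : Cardinal.{u}) : Language.order.Theory :=
  {φ | ∀ (P : Type u) [PartialOrder P], IsABRepresentable α β P → P ⊨ φ}

variable {α β : Cardinal.{u}} {M : Type u} [PartialOrder M]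

theorem exists_realize_of_models [Nonempty M] (hM : ∀ φ ∈ theory α β, M ⊨ φ)
    (χ : Language.order.Formula M) (hχ : χ.Realize id) :
    ∃ (P : Type u) (_ : PartialOrder P), IsABRepresentable α β P ∧ ∃ v : M → P, χ.Realize v := by
  classical
  -- `exClosure` alone also holds in the empty poset when `χ` has no free variables.
  have realize_closure (N : Type u) [PartialOrder N] :
      N ⊨ χ.exClosure ⊓ Sentence.cardGe _ 1 ↔ Nonempty N ∧ ∃ v : M → N, χ.Realize v := by
    simp only [Sentence.realize_inf, Sentence.realize_cardGe, Nat.cast_one,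
      Cardinal.one_le_iff_ne_zero, mk_ne_zero_iff]
    exact ⟨fun ⟨hσ, _⟩ => ⟨inferInstance, (Formula.realize_exClosure_iff χ).1 hσ⟩,
      fun ⟨_, hv⟩ => ⟨(Formula.realize_exClosure_iff χ).2 hv, inferInstance⟩⟩
  by_contra! hP
  refine hM (χ.exClosure ⊓ Sentence.cardGe _ 1).not (fun P _ hrep => ?_)
    ((realize_closure M).2 ⟨inferInstance, id, hχ⟩)
  rw [Sentence.realize_not, realize_closure]
  exact fun ⟨_, v, hv⟩ => hP P _ hrep v hv

theorem exists_separating_sat_of_finset (hM : ∀ φ ∈ theory α β, M ⊨ φ) {p q : M} (hpq : ¬p ≤ q)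
    (u : Finset {r : Requirement M // r.Admissible α β ∧ r.Holds id}) :
    ∃ F : Set M, p ∈ F ∧ q ∉ F ∧ ∀ r ∈ u, r.1.clause.Sat F := by
  have : Nonempty M := ⟨p⟩
  obtain ⟨P, _, hP, v, hv⟩ := exists_realize_of_models hM
    (Formula.iInf (fun r : u => r.1.1.formula) ⊓ ∼(Formula.le p q)) (by
      simpa [Requirement.realize_formula, hpq] using fun _ _ h _ => h)
  simp only [Formula.realize_inf, Formula.realize_iInf, Requirement.realize_formula,
    Formula.realize_not, Formula.realize_le] at hv
  obtain ⟨F, hF, hp, hq⟩ := hP.exists_isABFilter hv.2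
  exact ⟨v ⁻¹' F, hp, hq, fun r hr => Requirement.sat_preimage hF r.2.1 (hv.1 ⟨r, hr⟩)⟩

theorem of_models (hα : α ≤ ℵ₀) (hβ : β ≤ ℵ₀) (hM : ∀ φ ∈ theory α β, M ⊨ φ) :
    IsABRepresentable α β M := by
  refine isABRepresentable_of_exists_isABFilter fun p q hpq => ?_
  obtain ⟨F, hp, hq, hF⟩ := Clause.exists_separating_sat
    (fun r : {r : Requirement M // r.Admissible α β ∧ r.Holds id} => r.1.clause) p q
    (exists_separating_sat_of_finset hM hpq)
  exact ⟨F, Requirement.isABFilter_of_forall_sat hα hβ fun r hr hv => hF ⟨r, hr, hv⟩, hp, hq⟩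

end IsABRepresentable

theorem representable_isElementary_general (α β : Cardinal.{u})
    (hαω : α ≤ ℵ₀) (hβω : β ≤ ℵ₀) :
    ∃ T : FirstOrder.Language.order.Theory,
      ∀ (P : Type u) [PartialOrder P],
        ((∀ φ ∈ T, @FirstOrder.Language.Sentence.Realize FirstOrder.Language.order P
            (FirstOrder.Language.orderStructure P) φ) ↔ IsABRepresentable α β P) :=
  ⟨IsABRepresentable.theory α β, fun _ _ =>
    ⟨IsABRepresentable.of_models hαω hβω, fun hP _ hφ => hφ _ hP⟩⟩

/-- The class of `(α,β)`-representable posets is elementary: there is a set of sentences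
in the first-order language of orders whose poset models are exactly the
`(α,β)`-representable posets. -/
theorem representable_isElementary (α β : Cardinal.{u})
    (hα2 : 2 ≤ α) (hαω : α ≤ ℵ₀) (hβ2 : 2 ≤ β) (hβω : β ≤ ℵ₀) :
    ∃ T : FirstOrder.Language.order.Theory,
      ∀ (P : Type u) [PartialOrder P],
        ((∀ φ ∈ T, @FirstOrder.Language.Sentence.Realize FirstOrder.Language.order P
            (FirstOrder.Language.orderStructure P) φ) ↔ IsABRepresentable α β P) :=
  representable_isElementary_general α β hαω hβω
end

section
/- For every cardinal α with 2 ≤ α, every poset is (α,2)-representable. -/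
open Cardinal

universe u

/-!
Send `p` to the set of non-bottom elements below it. Principal down-sets turn every existing
infimum into an intersection and every nonempty join of at most one element into a union. The
remaining join is the empty one, whose supremum is a bottom element; it must go to `∅`, which is
why bottom elements are left out of the representing set.
-/

def nonBotLowerSet {P : Type u} [Preorder P] (p : P) : Set {x : P // ¬ IsBot x} :=
  {x | x.1 ≤ p}

section

variable {P : Type u} [Preorder P]

theorem nonBotLowerSet_subset_iff {p q : P} : nonBotLowerSet p ⊆ nonBotLowerSet q ↔ p ≤ q := by
  refine ⟨fun hsub => ?_, fun hpq x hx => le_trans hx hpq⟩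
  by_cases hp : IsBot p
  · exact hp q
  · exact hsub (show (⟨p, hp⟩ : {x : P // ¬ IsBot x}) ∈ nonBotLowerSet p from le_rfl)

theorem nonBotLowerSet_eq_empty_of_isBot {p : P} (hp : IsBot p) : nonBotLowerSet p = ∅ :=
  Set.eq_empty_of_forall_notMem fun x hx => x.2 fun y => le_trans hx (hp y)

theorem nonBotLowerSet_of_isGLB {S : Set P} {m : P} (hm : IsGLB S m) :
    nonBotLowerSet m = ⋂ s ∈ S, nonBotLowerSet s := by
  ext x
  simp only [Set.mem_iInter]
  exact ⟨fun hxm s hs => le_trans hxm (hm.1 hs), fun hx => hm.2 fun s hs => hx s hs⟩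

theorem nonBotLowerSet_of_isLUB_of_subsingleton {T : Set P} {j : P} (hT : T.Subsingleton)
    (hj : IsLUB T j) : nonBotLowerSet j = ⋃ t ∈ T, nonBotLowerSet t := by
  rcases hT.eq_empty_or_singleton with rfl | ⟨t, rfl⟩
  · simpa using nonBotLowerSet_eq_empty_of_isBot (isLUB_empty_iff.mp hj)
  · have hjt : j ≤ t := hj.2 fun _ hs => le_of_eq (Set.mem_singleton_iff.mp hs)
    simpa using (nonBotLowerSet_subset_iff.mpr hjt).antisymm
      (nonBotLowerSet_subset_iff.mpr (hj.1 rfl))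

end

theorem Cardinal.mk_lt_two_iff_set_subsingleton {α : Type u} {s : Set α} :
    #s < 2 ↔ s.Subsingleton := by
  rw [← mk_le_one_iff_set_subsingleton, ← Order.lt_succ_iff,
    (by norm_cast : Order.succ (1 : Cardinal) = 2)]

theorem representable_alpha_two_general (α : Cardinal.{u})
    (P : Type u) [PartialOrder P] :
    IsABRepresentable α 2 P :=
  ⟨{x : P // ¬ IsBot x}, nonBotLowerSet, fun _ _ => nonBotLowerSet_subset_iff.symm,
    fun _ _ _ hm => nonBotLowerSet_of_isGLB hm,
    fun _ _ hT hj => nonBotLowerSet_of_isLUB_of_subsingleton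
      (Cardinal.mk_lt_two_iff_set_subsingleton.mp hT) hj⟩

theorem representable_alpha_two (α : Cardinal.{u}) (hα : 2 ≤ α)
    (P : Type u) [PartialOrder P] :
    IsABRepresentable α 2 P :=
  representable_alpha_two_general α P
end

section
/- For every cardinal β with 2 ≤ β, every poset is (2,β)-representable. -/
open Cardinal

universe u

theorem representable_two_beta (β : Cardinal.{u}) (hβ : 2 ≤ β)
    (P : Type u) [PartialOrder P] :
    IsABRepresentable 2 β P := by
  classical
  refine ⟨{S : Set P // S.Nonempty ∧ (∀ x ∈ S, ∀ y, x ≤ y → y ∈ S) ∧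
      ∀ T : Set P, ∀ j, IsLUB T j → j ∈ S → ∃ t ∈ T, t ∈ S},
    fun p => {S | p ∈ S.1}, ?_, ?_, ?_⟩
  · intro p q
    constructor
    · intro hpq S hp
      exact S.2.2.1 p hp q hpq
    · intro hsub
      by_contra hpq
      have hS : ({x : P | ¬ x ≤ q} : Set P).Nonempty ∧
          (∀ x ∈ {x : P | ¬ x ≤ q}, ∀ y, x ≤ y → y ∈ {x : P | ¬ x ≤ q}) ∧
          ∀ T : Set P, ∀ j, IsLUB T j → j ∈ {x : P | ¬ x ≤ q} →
            ∃ t ∈ T, t ∈ {x : P | ¬ x ≤ q} := by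
        refine ⟨⟨p, hpq⟩, ?_, ?_⟩
        · intro x hx y hxy hyq
          exact hx (hxy.trans hyq)
        · intro T j hT hj
          by_contra hc
          push_neg at hc
          exact hj (hT.2 fun t ht => not_not.mp (hc t ht))
      have := hsub (a := ⟨_, hS⟩) hpq
      exact this le_rfl
  · intro S m hS hglb
    have h1 : #S ≤ 1 := by
      have h2 : (2 : Cardinal) = Order.succ ((1:ℕ) : Cardinal) := by
        rw [Cardinal.succ_natCast]; norm_num
      rw [h2, Order.lt_succ_iff] at hS
      simpa using hS
    have hsub : S.Subsingleton := Cardinal.mk_le_one_iff_set_subsingleton.mp h1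
    rcases S.eq_empty_or_nonempty with hSe | ⟨s, hs⟩
    · subst hSe
      have htop : ∀ x : P, x ≤ m := by
        intro x
        exact hglb.2 (by simp [lowerBounds])
      ext A
      simp only [Set.mem_iUnion, Set.mem_iInter, Set.mem_empty_iff_false,
        Set.iInter_of_empty, Set.iInter_univ, Set.mem_univ, iff_true]
      obtain ⟨x, hx⟩ := A.2.1
      exact A.2.2.1 x hx m (htop x)
    · have hSs : S = {s} := by
        ext x
        constructor
        · intro hx; exact hsub hx hs
        · intro hx; rwa [Set.mem_singleton_iff.mp hx]
      subst hSs
      have hm : m = s := hglb.unique (isGLB_singleton)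
      subst hm
      simp
  · intro T j hT hlub
    ext A
    simp only [Set.mem_iUnion, Set.mem_setOf_eq]
    constructor
    · intro hj
      obtain ⟨t, ht, htA⟩ := A.2.2.2 T j hlub hj
      exact ⟨t, ht, htA⟩
    · rintro ⟨t, ht, htA⟩
      exact A.2.2.1 t htA j (hlub.1 ht)
end

section
/- There exists a finite poset P that is (3,3)-representable and a subset Q ⊆ P such that Q, equipped with the order induced from P, is not (3,3)-representable. Hence the class of (3,3)-representable posets is not closed under substructures. -/
open Cardinal

universe u

def M3_s8 : Set (Set (Fin 3)) := {∅, {0}, {1}, {2}, Set.univ}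

lemma pair_lt_three {X : Type} (a b : X) : #({a,b} : Set X) < 3 := by
  calc #({a,b} : Set X) ≤ #({b}:Set X) + 1 := Cardinal.mk_insert_le
  _ ≤ 2 := by rw [Cardinal.mk_singleton]; norm_num
  _ < 3 := by norm_num

/-- There is a finite `(3,3)`-representable poset with a subposet (under the induced
order) that is not `(3,3)`-representable: the class of `(3,3)`-representable posets is
not closed under substructures. -/
theorem representable33_not_closed_under_substructures :
    ∃ (P : Type) (instP : PartialOrder P) (_ : Fintype P) (Q : Set P),
      @IsABRepresentable 3 3 P instP ∧
      ¬@IsABRepresentable 3 3 Q (@Subtype.partialOrder P instP fun x => x ∈ Q) := by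
  refine ⟨Set (Fin 3), inferInstance, inferInstance,
    M3_s8, ?_, ?_⟩
  · refine ⟨Fin 3, fun s => s, fun p q => Iff.rfl, ?_, ?_⟩
    · intro S m _ hm
      rw [← hm.sInf_eq, Set.sInf_eq_sInter, Set.sInter_eq_biInter]
    · intro T j _ hj
      rw [← hj.sSup_eq, Set.sSup_eq_sUnion, Set.sUnion_eq_biUnion]
  · rintro ⟨X, h, hemb, hinf, hsup⟩
    have memBot : (∅ : Set (Fin 3)) ∈ M3_s8 := by simp [M3_s8]
    have memA : ({0} : Set (Fin 3)) ∈ M3_s8 := by simp [M3_s8]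
    have memB : ({1} : Set (Fin 3)) ∈ M3_s8 := by simp [M3_s8]
    have memC : ({2} : Set (Fin 3)) ∈ M3_s8 := by simp [M3_s8]
    have memTop : (Set.univ : Set (Fin 3)) ∈ M3_s8 := by simp [M3_s8]
    set Bot : ↥M3_s8 := ⟨∅, memBot⟩
    set A : ↥M3_s8 := ⟨{0}, memA⟩
    set B : ↥M3_s8 := ⟨{1}, memB⟩
    set C : ↥M3_s8 := ⟨{2}, memC⟩
    set Top : ↥M3_s8 := ⟨Set.univ, memTop⟩
    -- GLB of {A,B} is Bot
    have glbAB : IsGLB ({A, B} : Set ↥M3_s8) Bot := by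
      constructor
      · rintro q (rfl | rfl) <;> exact Set.empty_subset _
      · intro q hq
        have h1 : (q : Set (Fin 3)) ⊆ {0} := hq (Set.mem_insert _ _)
        have h2 : (q : Set (Fin 3)) ⊆ {1} := hq (Set.mem_insert_of_mem _ rfl)
        show (q : Set (Fin 3)) ⊆ ∅
        intro x hx
        have e1 : x = 0 := h1 hx
        have e2 : x = 1 := h2 hx
        simp [e1] at e2
    have glbAC : IsGLB ({A, C} : Set ↥M3_s8) Bot := by
      constructor
      · rintro q (rfl | rfl) <;> exact Set.empty_subset _
      · intro q hq
        have h1 : (q : Set (Fin 3)) ⊆ {0} := hq (Set.mem_insert _ _)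
        have h2 : (q : Set (Fin 3)) ⊆ {2} := hq (Set.mem_insert_of_mem _ rfl)
        show (q : Set (Fin 3)) ⊆ ∅
        intro x hx
        have e1 : x = 0 := h1 hx
        have e2 : x = 2 := h2 hx
        simp [e1] at e2
    have lubBC : IsLUB ({B, C} : Set ↥M3_s8) Top := by
      constructor
      · rintro q (rfl | rfl) <;> exact Set.subset_univ _
      · intro q hq
        have h1 : ({1} : Set (Fin 3)) ⊆ q := hq (Set.mem_insert _ _)
        have h2 : ({2} : Set (Fin 3)) ⊆ q := hq (Set.mem_insert_of_mem _ rfl)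
        obtain ⟨v, hv⟩ := q
        have hv' := hv
        simp only [M3_s8, Set.mem_insert_iff, Set.mem_singleton_iff] at hv'
        show Set.univ ⊆ v
        rcases hv' with rfl | rfl | rfl | rfl | rfl
        · exact absurd (h1 rfl) (by simp)
        · exact absurd (h1 rfl) (by simp)
        · exact absurd (h2 rfl) (by simp)
        · exact absurd (h1 rfl) (by simp)
        · exact subset_rfl
    have eAB : h Bot = h A ∩ h B := by
      rw [hinf {A, B} Bot (pair_lt_three A B) glbAB, Set.biInter_pair]
    have eAC : h Bot = h A ∩ h C := by
      rw [hinf {A, C} Bot (pair_lt_three A C) glbAC, Set.biInter_pair]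
    have eBC : h Top = h B ∪ h C := by
      rw [hsup {B, C} Top (pair_lt_three B C) lubBC, Set.biUnion_pair]
    have hAT : h A ⊆ h Top := (hemb A Top).mp (Set.subset_univ _)
    have hAnB : ¬ h A ⊆ h Bot := by
      intro hc
      have : A ≤ Bot := (hemb A Bot).mpr hc
      have : ({0} : Set (Fin 3)) ⊆ ∅ := this
      simpa using this rfl
    obtain ⟨x, hxA, hxB⟩ := Set.not_subset.mp hAnB
    have : x ∈ h B ∪ h C := eBC ▸ hAT hxA
    rcases this with hx | hx
    · exact hxB (eAB ▸ ⟨hxA, hx⟩)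
    · exact hxB (eAC ▸ ⟨hxA, hx⟩)
end

section
/- The diamond lattice M₃, regarded as a poset, is not (3,3)-representable. -/
open Cardinal

universe u

/-- The diamond lattice `M₃`: five elements `⊥ < a, b, c < ⊤` with `a`, `b`, `c`
pairwise incomparable. -/
inductive M3 : Type
  | bot | a | b | c | top
  deriving DecidableEq

instance : Fintype M3 :=
  ⟨{M3.bot, M3.a, M3.b, M3.c, M3.top}, fun x => by cases x <;> simp⟩

instance : LE M3 := ⟨fun x y => x = y ∨ x = M3.bot ∨ y = M3.top⟩

instance : DecidableRel ((· ≤ ·) : M3 → M3 → Prop) := fun x y =>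
  inferInstanceAs (Decidable (x = y ∨ x = M3.bot ∨ y = M3.top))

instance : PartialOrder M3 where
  le := (· ≤ ·)
  le_refl := by decide
  le_trans := by decide
  le_antisymm := by decide

/-! Unions distribute over intersections, so a representation preserving binary joins and meets
cannot exist for the non-distributive lattice `M₃`: from
`⊤ = a ⊔ b = a ⊔ c` and `b ⊓ c = ⊥ ≤ a` one gets `h ⊤ ⊆ h a ∪ (h b ∩ h c) = h a`, i.e. `⊤ ≤ a`. -/

theorem Cardinal.mk_pair_le_two {α : Type u} (x y : α) : #({x, y} : Set α) ≤ 2 :=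
  calc #({x, y} : Set α) ≤ #({y} : Set α) + 1 := mk_insert_le
    _ = 2 := by rw [mk_singleton, one_add_one_eq_two]

theorem IsABRepresentable.le_of_isLUB_of_isGLB {α β : Cardinal.{u}} {P : Type u} [PartialOrder P]
    (hα : 2 < α) (hβ : 2 < β) (hP : IsABRepresentable α β P) {a b c m t : P}
    (hab : IsLUB {a, b} t) (hac : IsLUB {a, c} t) (hbc : IsGLB {b, c} m) (hma : m ≤ a) :
    t ≤ a := by
  obtain ⟨X, h, hle, hinf, hsup⟩ := hP
  have pair_lt {γ : Cardinal.{u}} (hγ : 2 < γ) (x y : P) : #({x, y} : Set P) < γ :=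
    (mk_pair_le_two x y).trans_lt hγ
  have hab' : h t = h a ∪ h b := by rw [hsup _ _ (pair_lt hβ a b) hab, Set.biUnion_pair]
  have hac' : h t = h a ∪ h c := by rw [hsup _ _ (pair_lt hβ a c) hac, Set.biUnion_pair]
  have hbc' : h m = h b ∩ h c := by rw [hinf _ _ (pair_lt hα b c) hbc, Set.biInter_pair]
  rw [hle]
  calc h t ⊆ (h a ∪ h b) ∩ (h a ∪ h c) := Set.subset_inter hab'.subset hac'.subset
    _ = h a ∪ h m := by rw [← Set.union_inter_distrib_left, hbc']
    _ ⊆ h a := Set.union_subset le_rfl ((hle m a).mp hma)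

theorem M3.isLUB_pair_top {x y : M3} (hx : x ≠ M3.bot) (hy : y ≠ M3.bot) (hxy : x ≠ y) :
    IsLUB {x, y} M3.top := by
  simp only [isLUB_iff_le_iff, upperBounds_insert, upperBounds_singleton, Set.mem_inter_iff,
    Set.mem_Ici]
  revert x y
  decide

theorem M3.isGLB_pair_bot {x y : M3} (hx : x ≠ M3.top) (hy : y ≠ M3.top) (hxy : x ≠ y) :
    IsGLB {x, y} M3.bot := by
  simp only [isGLB_iff_le_iff, lowerBounds_insert, lowerBounds_singleton, Set.mem_inter_iff,
    Set.mem_Iic]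
  revert x y
  decide

theorem M3_not_representable33 : ¬IsABRepresentable 3 3 M3 := by
  intro hM3
  have h23 : (2 : Cardinal) < 3 := by norm_num
  have htop_le_a : M3.top ≤ M3.a :=
    hM3.le_of_isLUB_of_isGLB h23 h23
      (M3.isLUB_pair_top (y := M3.b) (by decide) (by decide) (by decide))
      (M3.isLUB_pair_top (y := M3.c) (by decide) (by decide) (by decide))
      (M3.isGLB_pair_bot (x := M3.b) (y := M3.c) (by decide) (by decide) (by decide))
      (by decide)
  exact absurd htop_le_a (by decide)
end

section
/- Let P be a poset, let α, β be cardinals with 2 ≤ α, β ≤ ℵ₀, let Γ be an (α,β)-filter of P, let U ⊆ Γ, and let q ∈ P with q ∉ Γ. Then Win^{α,β}_n(U, q) holds for every n ∈ ℕ; that is, player ∃ has an n-strategy in the (α,β)-game with starting position (U, {q}) for every n. -/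
open Cardinal

universe u

/-- `Win α β n U q` : player ∃ has an `n`-strategy in the `(α,β)`-game with
starting position `(U, {q})`. -/
def Win (α β : Cardinal.{u}) {P : Type u} [PartialOrder P] : ℕ → Set P → P → Prop
  | 0, U, q => q ∉ U
  | n + 1, U, q => q ∉ U ∧
      (∀ a ∈ U, ∀ b, a ≤ b → Win α β n (insert b U) q) ∧
      (∀ A : Set P, A ⊆ U → #A < α → ∀ m, IsGLB A m → Win α β n (insert m U) q) ∧
      (∀ B : Set P, #B < β → ∀ j, IsLUB B j → j ∈ U → ∃ b ∈ B, Win α β n (insert b U) q)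

theorem filter_gives_n_strategy (α β : Cardinal.{u}) (hα2 : 2 ≤ α) (hαω : α ≤ ℵ₀)
    (hβ2 : 2 ≤ β) (hβω : β ≤ ℵ₀) (P : Type u) [PartialOrder P]
    (Γ : Set P) (hΓ : IsABFilter α β Γ) (U : Set P) (hU : U ⊆ Γ) (q : P) (hq : q ∉ Γ) :
    ∀ n : ℕ, Win α β n U q := by
  obtain ⟨hup, hinf, hsup⟩ := hΓ
  intro n
  induction n generalizing U with
  | zero => exact fun h => hq (hU h)
  | succ n ih =>
    refine ⟨fun h => hq (hU h), ?_, ?_, ?_⟩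
    · intro a ha b hab
      exact ih _ (Set.insert_subset (hup a (hU ha) b hab) hU)
    · intro A hA hAα m hm
      exact ih _ (Set.insert_subset (hinf A m (hA.trans hU) hAα hm) hU)
    · intro B hBβ j hj hjU
      by_contra hcon
      push_neg at hcon
      have hBΓ : B ∩ Γ = ∅ := by
        ext b
        simp only [Set.mem_inter_iff, Set.mem_empty_iff_false, iff_false, not_and]
        intro hb hbΓ
        exact absurd (ih _ (Set.insert_subset hbΓ hU)) (by simpa using hcon b hb)
      exact hsup B j hBβ hj hBΓ (hU hjU)
end

section
/- A poset P is (3,3)-representable if and only if for all p, q ∈ P with p ≰ q and all n ∈ ℕ, Win^{3,3}_n({p}, q) holds; that is, if and only if player ∃ has an n-strategy in the (3,3)-game with starting position ({p}, {q}) for every n and every pair p ≰ q. -/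
open Cardinal

universe u

namespace Rep33Aux

variable {P : Type u} [PartialOrder P]

lemma three_lt_aleph0 : (3 : Cardinal.{u}) < ℵ₀ := by exact_mod_cast nat_lt_aleph0 3

omit [PartialOrder P] in
lemma finite_of_lt_three {A : Set P} (h : #A < 3) : A.Finite := by
  rw [← Cardinal.lt_aleph0_iff_set_finite]
  exact h.trans three_lt_aleph0

/-- Winning is antitone in the position set. -/
lemma win_mono_set {q : P} : ∀ n {U V : Set P}, Win 3 3 n U q → V ⊆ U → Win 3 3 n V q := by
  intro n
  induction n with
  | zero => intro U V h hVU hq; exact h (hVU hq)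
  | succ n ih =>
    intro U V h hVU
    obtain ⟨hq, h1, h2, h3⟩ := h
    refine ⟨fun hq' => hq (hVU hq'), ?_, ?_, ?_⟩
    · intro a ha b hab
      exact ih (h1 a (hVU ha) b hab) (Set.insert_subset_insert hVU)
    · intro A hA hcard m hm
      exact ih (h2 A (hA.trans hVU) hcard m hm) (Set.insert_subset_insert hVU)
    · intro B hcard j hj hjV
      obtain ⟨b, hb, hw⟩ := h3 B hcard j hj (hVU hjV)
      exact ⟨b, hb, ih hw (Set.insert_subset_insert hVU)⟩

lemma win_succ_imp {q : P} : ∀ n {U : Set P}, Win 3 3 (n+1) U q → Win 3 3 n U q := by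
  intro n
  induction n with
  | zero => intro U h; exact h.1
  | succ n ih =>
    intro U h
    obtain ⟨hq, h1, h2, h3⟩ := h
    refine ⟨hq, ?_, ?_, ?_⟩
    · intro a ha b hab; exact ih (h1 a ha b hab)
    · intro A hA hcard m hm; exact ih (h2 A hA hcard m hm)
    · intro B hcard j hj hjU
      obtain ⟨b, hb, hw⟩ := h3 B hcard j hj hjU
      exact ⟨b, hb, ih hw⟩

lemma win_of_le {q : P} {U : Set P} {m n : ℕ} (hmn : m ≤ n) (h : Win 3 3 n U q) :
    Win 3 3 m U q := by
  induction n with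
  | zero => rwa [Nat.le_zero.mp hmn]
  | succ n ih =>
    rcases Nat.lt_or_ge m (n+1) with hlt | hge
    · exact ih (Nat.lt_succ_iff.mp hlt) (win_succ_imp n h)
    · rwa [le_antisymm hmn hge]

/-- A set is good (w.r.t. `q`) if all of its finite subsets are winning positions
for every game length. -/
def Good (q : P) (F : Set P) : Prop :=
  ∀ U : Finset P, ↑U ⊆ F → ∀ n : ℕ, Win 3 3 n (↑U) q

lemma good_not_mem {q : P} {F : Set P} (hF : Good q F) : q ∉ F := by
  intro hq
  have := hF {q} (by simpa using hq) 0
  simp [Win] at this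

lemma good_insert_up {q : P} {F : Set P} (hF : Good q F) {a b : P} (ha : a ∈ F)
    (hab : a ≤ b) : Good q (insert b F) := by
  classical
  intro U hU n
  set U' : Finset P := insert a (U.erase b) with hU'
  have hU'F : ↑U' ⊆ F := by
    intro x hx
    simp only [hU', Finset.coe_insert, Set.mem_insert_iff, Finset.coe_erase,
      Set.mem_diff, Set.mem_singleton_iff] at hx
    rcases hx with rfl | ⟨hxU, hxb⟩
    · exact ha
    · rcases hU hxU with rfl | h
      · exact absurd rfl hxb
      · exact h
  have w := hF U' hU'F (n+1)
  have w' := w.2.1 a (by simp [hU']) b hab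
  refine win_mono_set n w' ?_
  intro x hx
  by_cases hxb : x = b
  · exact hxb ▸ Set.mem_insert _ _
  · exact Set.mem_insert_of_mem _ (by simp [hU', Finset.mem_erase, hxb, hx])

lemma good_insert_glb {q : P} {F : Set P} (hF : Good q F) {A : Set P} (hA : A ⊆ F)
    (hcard : #A < 3) {m : P} (hm : IsGLB A m) : Good q (insert m F) := by
  classical
  intro U hU n
  have hfin : A.Finite := finite_of_lt_three hcard
  set U' : Finset P := U.erase m ∪ hfin.toFinset with hU'
  have hU'F : ↑U' ⊆ F := by
    intro x hx
    simp only [hU', Finset.coe_union, Set.mem_union, Finset.coe_erase, Set.mem_diff,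
      Set.mem_singleton_iff, Set.Finite.coe_toFinset] at hx
    rcases hx with ⟨hxU, hxm⟩ | hxA
    · rcases hU hxU with rfl | h
      · exact absurd rfl hxm
      · exact h
    · exact hA hxA
  have w := hF U' hU'F (n+1)
  have hAU' : A ⊆ (↑U' : Set P) := by
    intro x hx
    simp [hU', Set.Finite.mem_toFinset, hx]
  have w' := w.2.2.1 A hAU' hcard m hm
  refine win_mono_set n w' ?_
  intro x hx
  by_cases hxm : x = m
  · exact hxm ▸ Set.mem_insert _ _
  · exact Set.mem_insert_of_mem _ (by simp [hU', Finset.mem_erase, hxm, hx])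

lemma good_insert_lub {q : P} {F : Set P} (hF : Good q F) {B : Set P}
    (hcard : #B < 3) {j : P} (hj : IsLUB B j) (hjF : j ∈ F) :
    ∃ b ∈ B, Good q (insert b F) := by
  classical
  by_contra hcon
  push_neg at hcon
  have hex : ∀ b : P, ∃ (U : Finset P) (n : ℕ),
      b ∈ B → (↑U ⊆ insert b F ∧ ¬ Win 3 3 n (↑U) q) := by
    intro b
    by_cases hb : b ∈ B
    · have := hcon b hb
      unfold Good at this
      push_neg at this
      obtain ⟨U, hU, n, hn⟩ := this
      exact ⟨U, n, fun _ => ⟨hU, hn⟩⟩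
    · exact ⟨∅, 0, fun h => absurd h hb⟩
  choose Uf nf hf using hex
  have hfinB : B.Finite := finite_of_lt_three hcard
  set tB : Finset P := hfinB.toFinset with htB
  set V : Finset P := insert j (tB.biUnion fun b => (Uf b).erase b) with hV
  have hVF : ↑V ⊆ F := by
    intro x hx
    simp only [hV, Finset.coe_insert, Set.mem_insert_iff, Finset.coe_biUnion,
      Set.mem_iUnion, Finset.mem_coe, Finset.mem_erase] at hx
    rcases hx with rfl | ⟨b, hb, hxb, hxU⟩
    · exact hjF
    · have hbB : b ∈ B := by simpa [htB, Set.Finite.mem_toFinset] using hb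
      rcases (hf b hbB).1 hxU with rfl | h
      · exact absurd rfl hxb
      · exact h
  set N : ℕ := tB.sup nf with hN
  have w := hF V hVF (N+1)
  have hjV : j ∈ (↑V : Set P) := by simp [hV]
  obtain ⟨b, hbB, hw⟩ := w.2.2.2 B hcard j hj hjV
  have hbtB : b ∈ tB := by simpa [htB, Set.Finite.mem_toFinset] using hbB
  have hUb : (↑(Uf b) : Set P) ⊆ insert b (↑V : Set P) := by
    intro x hx
    by_cases hxb : x = b
    · exact hxb ▸ Set.mem_insert _ _
    · refine Set.mem_insert_of_mem _ ?_
      simp only [hV, Finset.coe_insert, Set.mem_insert_iff, Finset.coe_biUnion,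
        Set.mem_iUnion, Finset.mem_coe]
      exact Or.inr ⟨b, hbtB, Finset.mem_erase.mpr ⟨hxb, hx⟩⟩
  have : Win 3 3 (nf b) (↑(Uf b)) q :=
    win_of_le (Finset.le_sup hbtB) (win_mono_set N hw hUb)
  exact (hf b hbB).2 this

/-- The points of the representation: up-closed, meet-closed, prime subsets. -/
def InX (F : Set P) : Prop :=
  (∀ a ∈ F, ∀ b, a ≤ b → b ∈ F) ∧
  (∀ A : Set P, A ⊆ F → #A < 3 → ∀ m, IsGLB A m → m ∈ F) ∧
  (∀ B : Set P, #B < 3 → ∀ j, IsLUB B j → j ∈ F → ∃ b ∈ B, b ∈ F)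

lemma exists_separating (hwin : ∀ p q : P, ¬p ≤ q → ∀ n : ℕ, Win 3 3 n {p} q)
    {p q : P} (hpq : ¬ p ≤ q) : ∃ F : Set P, InX F ∧ p ∈ F ∧ q ∉ F := by
  classical
  set S : Set (Set P) := {F | p ∈ F ∧ Good q F} with hS
  have hbase : ({p} : Set P) ∈ S := by
    refine ⟨rfl, ?_⟩
    intro U hU n
    exact win_mono_set n (hwin p q hpq n) hU
  have hchains : ∀ c ⊆ S, IsChain (· ⊆ ·) c → c.Nonempty → ∃ ub ∈ S, ∀ s ∈ c, s ⊆ ub := by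
    intro c hcS hchain hcne
    refine ⟨⋃₀ c, ⟨?_, ?_⟩, fun s hs => Set.subset_sUnion_of_mem hs⟩
    · obtain ⟨F, hF⟩ := hcne
      exact Set.mem_sUnion.mpr ⟨F, hF, (hcS hF).1⟩
    · intro U hU n
      rw [Set.sUnion_eq_biUnion] at hU
      obtain ⟨F, hFc, hUF⟩ := DirectedOn.exists_mem_subset_of_finset_subset_biUnion hcne
        (hchain.directedOn) hU
      exact (hcS hFc).2 U hUF n
  obtain ⟨M, hpM, hMmax⟩ := zorn_subset_nonempty S hchains {p} hbase
  · have hMS : M ∈ S := hMmax.prop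
    obtain ⟨hpM', hGood⟩ := hMS
    have hmax : ∀ F ∈ S, M ⊆ F → F ⊆ M := fun F hF hMF => hMmax.2 hF hMF
    refine ⟨M, ⟨?_, ?_, ?_⟩, hpM', good_not_mem hGood⟩
    · intro a ha b hab
      have hG := good_insert_up hGood ha hab
      exact hmax _ ⟨Set.mem_insert_of_mem _ hpM', hG⟩ (Set.subset_insert _ _)
        (Set.mem_insert _ _)
    · intro A hA hcard m hm
      have hG := good_insert_glb hGood hA hcard hm
      exact hmax _ ⟨Set.mem_insert_of_mem _ hpM', hG⟩ (Set.subset_insert _ _)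
        (Set.mem_insert _ _)
    · intro B hcard j hj hjM
      obtain ⟨b, hb, hG⟩ := good_insert_lub hGood hcard hj hjM
      exact ⟨b, hb, hmax _ ⟨Set.mem_insert_of_mem _ hpM', hG⟩ (Set.subset_insert _ _)
        (Set.mem_insert _ _)⟩

end Rep33Aux

theorem representable33_iff_win (P : Type u) [PartialOrder P] :
    IsABRepresentable 3 3 P ↔
      ∀ p q : P, ¬p ≤ q → ∀ n : ℕ, Win 3 3 n {p} q := by
  constructor
  · rintro ⟨X, h, hemb, hinf, hsup⟩ p q hpq n
    have hns : ¬ h p ⊆ h q := fun hs => hpq ((hemb p q).2 hs)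
    obtain ⟨x, hxp, hxq⟩ := Set.not_subset.mp hns
    have key : ∀ n (U : Set P), (∀ u ∈ U, x ∈ h u) → Win 3 3 n U q := by
      intro n
      induction n with
      | zero => intro U hU hqU; exact hxq (hU q hqU)
      | succ n ih =>
        intro U hU
        refine ⟨fun hqU => hxq (hU q hqU), ?_, ?_, ?_⟩
        · intro a ha b hab
          refine ih _ ?_
          intro u hu
          rcases hu with rfl | hu
          · exact (hemb a u).1 hab (hU a ha)
          · exact hU u hu
        · intro A hA hcard m hm
          refine ih _ ?_
          intro u hu
          rcases hu with rfl | hu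
          · rw [hinf A u hcard hm]
            exact Set.mem_iInter₂.mpr fun s hs => hU s (hA hs)
          · exact hU u hu
        · intro B hcard j hj hjU
          have hxj : x ∈ h j := hU j hjU
          rw [hsup B j hcard hj] at hxj
          obtain ⟨b, hbB, hxb⟩ := Set.mem_iUnion₂.mp hxj
          refine ⟨b, hbB, ih _ ?_⟩
          intro u hu
          rcases hu with rfl | hu
          · exact hxb
          · exact hU u hu
    exact key n {p} (by rintro u rfl; exact hxp)
  · intro hwin
    refine ⟨{F : Set P // Rep33Aux.InX F}, fun p => {F | p ∈ F.1}, ?_, ?_, ?_⟩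
    · intro p q
      constructor
      · intro hpq F hF
        exact F.2.1 p hF q hpq
      · intro hsub
        by_contra hpq
        obtain ⟨F, hFX, hpF, hqF⟩ := Rep33Aux.exists_separating hwin hpq
        have := hsub (show (⟨F, hFX⟩ : {F : Set P // Rep33Aux.InX F}) ∈
          {G : {F : Set P // Rep33Aux.InX F} | p ∈ G.1} from hpF)
        exact hqF this
    · intro S m hcard hm
      ext F
      simp only [Set.mem_setOf_eq, Set.mem_iInter]
      constructor
      · intro hmF s hs
        exact F.2.1 m hmF s (hm.1 hs)
      · intro hS
        exact F.2.2.1 S (fun s hs => hS s hs) hcard m hm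
    · intro T j hcard hj
      ext F
      simp only [Set.mem_setOf_eq, Set.mem_iUnion]
      constructor
      · intro hjF
        obtain ⟨b, hbT, hbF⟩ := F.2.2.2 T hcard j hj hjF
        exact ⟨b, hbT, hbF⟩
      · rintro ⟨t, htT, htF⟩
        exact F.2.1 t htF j (hj.1 htT)
end

section
/- Let α, β be finite cardinals with 2 ≤ α, β < ℵ₀ and let P be a poset. Then P is (α,β)-representable if and only if for all p, q ∈ P with p ≰ q and all n ∈ ℕ, Win^{α,β}_n({p}, q) holds. -/
open Cardinal

universe u

/-! Both sides say that every `p ≰ q` is separated by an `(α,β)`-prime filter: an up-set closed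
under existing `<α`-infima whose complement is closed under existing `<β`-suprema. The points of
a representation give such filters, and conversely the filters form a representing space. A prime
filter containing `U` but not `q` is an `n`-strategy from `(U, {q})` for every `n`. Conversely,
for finite `α` and `β`, the positions won for every `n` are closed under unions of chains: an
infimum challenge involves finitely many elements, already present in one member of the chain,
and a supremum challenge has finitely many answers, so by pigeonhole a single answer works at
every level and in every member. Zorn gives a maximal such position, and maximality makes it a
prime filter. -/

open Set

section PrimeFilter

variable (α β : Cardinal.{u}) {P : Type u} [PartialOrder P]

structure IsABPrimeFilter (F : Set P) : Prop where
  isUpperSet : IsUpperSet F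
  glb_mem : ∀ ⦃A : Set P⦄, A ⊆ F → #A < α → ∀ ⦃m⦄, IsGLB A m → m ∈ F
  exists_mem_of_lub_mem : ∀ ⦃B : Set P⦄, #B < β → ∀ ⦃j⦄, IsLUB B j → j ∈ F → ∃ b ∈ B, b ∈ F

theorem isABPrimeFilter_setOf_mem {X : Type*} {h : P → Set X} (hmono : Monotone h)
    (hinf : ∀ (S : Set P) (m : P), #S < α → IsGLB S m → h m = ⋂ s ∈ S, h s)
    (hsup : ∀ (T : Set P) (j : P), #T < β → IsLUB T j → h j = ⋃ t ∈ T, h t) (x : X) :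
    IsABPrimeFilter α β {p | x ∈ h p} where
  isUpperSet _ _ hab hx := hmono hab hx
  glb_mem A hA hA_card m hm := by
    rw [mem_ofPred_eq, hinf A m hA_card hm]
    exact mem_iInter₂.2 fun s hs => hA hs
  exists_mem_of_lub_mem B hB_card j hj hjx := by
    rw [mem_ofPred_eq, hsup B j hB_card hj] at hjx
    simpa using hjx

theorem isABRepresentable_iff_forall_exists_isABPrimeFilter :
    IsABRepresentable α β P ↔
      ∀ p q : P, ¬p ≤ q → ∃ F, IsABPrimeFilter α β F ∧ p ∈ F ∧ q ∉ F := by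
  constructor
  · rintro ⟨X, h, hemb, hinf, hsup⟩ p q hpq
    obtain ⟨x, hxp, hxq⟩ := not_subset.1 (mt (hemb p q).2 hpq)
    exact ⟨_, isABPrimeFilter_setOf_mem α β (fun a b => (hemb a b).1) hinf hsup x, hxp, hxq⟩
  · intro hsep
    refine ⟨{F : Set P // IsABPrimeFilter α β F}, fun p => {F | p ∈ F.1}, fun p q => ?_,
      fun S m hS_card hm => ?_, fun T j hT_card hj => ?_⟩
    · refine ⟨fun hpq F hp => F.2.isUpperSet hpq hp, fun hpq => ?_⟩
      by_contra hnot
      obtain ⟨F, hF, hp, hq⟩ := hsep p q hnot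
      exact hq (hpq (show (⟨F, hF⟩ : {F // IsABPrimeFilter α β F}) ∈ {F | p ∈ F.1} from hp))
    · ext F
      simp only [mem_ofPred_eq, mem_iInter]
      exact ⟨fun hmF s hs => F.2.isUpperSet (hm.1 hs) hmF,
        fun hS => F.2.glb_mem (fun s hs => hS s hs) hS_card hm⟩
    · ext F
      simp only [mem_ofPred_eq, mem_iUnion, exists_prop]
      exact ⟨F.2.exists_mem_of_lub_mem hT_card hj,
        fun ⟨t, ht, htF⟩ => F.2.isUpperSet (hj.1 ht) htF⟩

end PrimeFilter

namespace Win

variable {α β : Cardinal.{u}} {P : Type u} [PartialOrder P]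

theorem of_subset {n : ℕ} {U V : Set P} {q : P} (hUV : U ⊆ V) (hV : Win α β n V q) :
    Win α β n U q := by
  induction n generalizing U V with
  | zero => exact fun hq => hV (hUV hq)
  | succ n ih =>
    obtain ⟨hq, hup, hinf, hsup⟩ := hV
    have hins : ∀ b, insert b U ⊆ insert b V := fun b => insert_subset_insert hUV
    refine ⟨fun h => hq (hUV h), fun a ha b hab => ih (hins b) (hup a (hUV ha) b hab),
      fun A hA hA_card m hm => ih (hins m) (hinf A (hA.trans hUV) hA_card m hm),
      fun B hB_card j hj hjU => ?_⟩
    obtain ⟨b, hb, hwin⟩ := hsup B hB_card j hj (hUV hjU)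
    exact ⟨b, hb, ih (hins b) hwin⟩

theorem of_succ {n : ℕ} {U : Set P} {q : P} (h : Win α β (n + 1) U q) : Win α β n U q := by
  induction n generalizing U with
  | zero => exact h.1
  | succ n ih =>
    obtain ⟨hq, hup, hinf, hsup⟩ := h
    refine ⟨hq, fun a ha b hab => ih (hup a ha b hab),
      fun A hA hA_card m hm => ih (hinf A hA hA_card m hm), fun B hB_card j hj hjU => ?_⟩
    obtain ⟨b, hb, hwin⟩ := hsup B hB_card j hj hjU
    exact ⟨b, hb, ih hwin⟩

theorem anti {m n : ℕ} {U V : Set P} {q : P} (hmn : m ≤ n) (hUV : U ⊆ V)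
    (hV : Win α β n V q) : Win α β m U q := by
  refine of_subset hUV ?_
  induction n, hmn using Nat.le_induction with
  | base => exact hV
  | succ n _ ih => exact ih hV.of_succ

theorem of_subset_isABPrimeFilter {F : Set P} (hF : IsABPrimeFilter α β F) {q : P} (hq : q ∉ F)
    {n : ℕ} {U : Set P} (hU : U ⊆ F) : Win α β n U q := by
  induction n generalizing U with
  | zero => exact fun h => hq (hU h)
  | succ n ih =>
    refine ⟨fun h => hq (hU h),
      fun a ha b hab => ih (insert_subset (hF.isUpperSet hab (hU ha)) hU),
      fun A hA hA_card m hm => ih (insert_subset (hF.glb_mem (hA.trans hU) hA_card hm) hU),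
      fun B hB_card j hj hjU => ?_⟩
    obtain ⟨b, hb, hbF⟩ := hF.exists_mem_of_lub_mem hB_card hj (hU hjU)
    exact ⟨b, hb, ih (insert_subset hbF hU)⟩

end Win

theorem Set.Finite.nonempty_iInter_of_directed {ι X : Type*} [Nonempty ι] {B : Set X}
    (hB : B.Finite) {S : ι → Set X} (hSB : ∀ i, S i ⊆ B) (hS : Directed (· ⊇ ·) S)
    (hne : ∀ i, (S i).Nonempty) : (⋂ i, S i).Nonempty := by
  have : Finite (range S) := (hB.finite_subsets.subset (range_subset_iff.2 hSB)).to_subtype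
  choose g hg using fun s : range S => s.2
  obtain ⟨z, hz⟩ := hS.finite_le g
  obtain ⟨b, hb⟩ := hne z
  refine ⟨b, mem_iInter.2 fun i => ?_⟩
  have hgi : S (g ⟨S i, mem_range_self i⟩) = S i := hg _
  exact hgi ▸ hz ⟨S i, mem_range_self i⟩ hb

theorem IsChain.insert_sUnion_eq {X : Type*} {C : Set (Set X)} (hC : IsChain (· ⊆ ·) C)
    {Φ : Set X → Prop} (hΦ : Monotone Φ) {U₀ : Set X} (hU₀ : U₀ ∈ C) (hΦ₀ : Φ U₀) (b : X) :
    insert b (⋃₀ C) = ⋃₀ (insert b '' {U ∈ C | Φ U}) := by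
  ext x
  constructor
  · rintro (rfl | ⟨V, hV, hxV⟩)
    · exact ⟨insert x U₀, mem_image_of_mem _ ⟨hU₀, hΦ₀⟩, mem_insert _ _⟩
    · rcases hC.total hV hU₀ with hVU | hUV
      · exact ⟨insert b U₀, mem_image_of_mem _ ⟨hU₀, hΦ₀⟩, mem_insert_of_mem _ (hVU hxV)⟩
      · exact ⟨insert b V, mem_image_of_mem _ ⟨hV, hΦ hUV hΦ₀⟩, mem_insert_of_mem _ hxV⟩
  · rintro ⟨_, ⟨V, hV, rfl⟩, hx⟩
    exact insert_subset_insert (subset_sUnion_of_mem hV.1) hx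

section WinAll

variable {α β : Cardinal.{u}} {P : Type u} [PartialOrder P]

variable (α β) in
def WinAll (U : Set P) (q : P) : Prop := ∀ n, Win α β n U q

theorem IsChain.exists_mem_forall_winAll_insert (hβfin : β < ℵ₀) {q : P} {C : Set (Set P)}
    (hC : IsChain (· ⊆ ·) C) (hCwin : ∀ U ∈ C, WinAll α β U q) {B : Set P} (hB_card : #B < β)
    {j : P} (hj : IsLUB B j) {U₀ : Set P} (hU₀ : U₀ ∈ C) (hjU₀ : j ∈ U₀) :
    ∃ b ∈ B, ∀ U ∈ C, j ∈ U → WinAll α β (insert b U) q := by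
  let S : {U // U ∈ C ∧ j ∈ U} × ℕ → Set P := fun i => {b ∈ B | Win α β i.2 (insert b i.1.1) q}
  have : Nonempty {U // U ∈ C ∧ j ∈ U} := ⟨⟨U₀, hU₀, hjU₀⟩⟩
  have hS : Directed (· ⊇ ·) S := by
    have hle : ∀ {U V : Set P} {m n}, U ⊆ V → m ≤ n →
        {b ∈ B | Win α β n (insert b V) q} ⊆ {b ∈ B | Win α β m (insert b U) q} :=
      fun hUV hmn b hb => ⟨hb.1, hb.2.anti hmn (insert_subset_insert hUV)⟩
    rintro ⟨U, m⟩ ⟨V, n⟩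
    rcases hC.total U.2.1 V.2.1 with hUV | hVU
    · exact ⟨(V, max m n), hle hUV (le_max_left m n), hle subset_rfl (le_max_right m n)⟩
    · exact ⟨(U, max m n), hle subset_rfl (le_max_left m n), hle hVU (le_max_right m n)⟩
  have hne : ∀ i, (S i).Nonempty := fun ⟨U, n⟩ =>
    (hCwin U.1 U.2.1 (n + 1)).2.2.2 B hB_card j hj U.2.2
  obtain ⟨b, hb⟩ := (lt_aleph0_iff_set_finite.1 (hB_card.trans hβfin)).nonempty_iInter_of_directed
    (fun _ => sep_subset _ _) hS hne
  rw [mem_iInter] at hb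
  refine ⟨b, (hb (⟨U₀, hU₀, hjU₀⟩, 0)).1, fun U hU hjU n => (hb (⟨U, hU, hjU⟩, n)).2⟩

theorem IsChain.winAll_sUnion (hαfin : α < ℵ₀) (hβfin : β < ℵ₀) {q : P} {C : Set (Set P)}
    (hC : IsChain (· ⊆ ·) C) (hne : C.Nonempty) (hCwin : ∀ U ∈ C, WinAll α β U q) :
    WinAll α β (⋃₀ C) q := by
  intro n
  have hq : q ∉ ⋃₀ C := fun ⟨U, hU, hqU⟩ => hCwin U hU 0 hqU
  induction n generalizing C with
  | zero => exact hq
  | succ n ih =>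
    -- A move `b` is answered in the members of the chain that already see the challenge (`Φ`);
    -- they form a cofinal subchain.
    have hmove : ∀ {b : P} {Φ : Set P → Prop}, Monotone Φ → (∃ U ∈ C, Φ U) →
        (∀ U ∈ C, Φ U → WinAll α β (insert b U) q) → Win α β n (insert b (⋃₀ C)) q := by
      rintro b Φ hΦ ⟨U₀, hU₀, hΦ₀⟩ hwin
      rw [hC.insert_sUnion_eq hΦ hU₀ hΦ₀]
      have hchain : IsChain (· ⊆ ·) (insert b '' {U ∈ C | Φ U}) :=
        (hC.mono (sep_subset _ _)).image_of_map_rel _ _ (insert b) fun _ _ h =>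
          insert_subset_insert h
      refine ih hchain ⟨_, mem_image_of_mem _ ⟨hU₀, hΦ₀⟩⟩ ?_ ?_
      · rintro _ ⟨U, ⟨hU, hΦU⟩, rfl⟩
        exact hwin U hU hΦU
      · rintro ⟨_, ⟨U, ⟨hU, hΦU⟩, rfl⟩, hqU⟩
        exact hwin U hU hΦU 0 hqU
    refine ⟨hq, fun a ⟨U₀, hU₀, haU₀⟩ b hab => ?_, fun A hA hA_card m hm => ?_,
      fun B hB_card j hj ⟨U₀, hU₀, hjU₀⟩ => ?_⟩
    · exact hmove (Φ := (a ∈ ·)) (fun _ _ h ha => h ha) ⟨U₀, hU₀, haU₀⟩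
        fun U hU haU k => (hCwin U hU (k + 1)).2.1 a haU b hab
    · obtain ⟨U₀, hU₀, hAU₀⟩ := hC.directedOn.exists_mem_subset_of_finite_of_subset_sUnion hne
        (lt_aleph0_iff_set_finite.1 (hA_card.trans hαfin)) hA
      exact hmove (Φ := (A ⊆ ·)) (fun _ _ h hA => hA.trans h) ⟨U₀, hU₀, hAU₀⟩
        fun U hU hAU k => (hCwin U hU (k + 1)).2.2.1 A hAU hA_card m hm
    · obtain ⟨b, hb, hwin⟩ := hC.exists_mem_forall_winAll_insert hβfin hCwin hB_card hj hU₀ hjU₀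
      exact ⟨b, hb, hmove (Φ := (j ∈ ·)) (fun _ _ h hj => h hj) ⟨U₀, hU₀, hjU₀⟩ hwin⟩

theorem Maximal.isABPrimeFilter (hβfin : β < ℵ₀) {q : P} {M : Set P}
    (hM : Maximal (WinAll α β · q) M) : IsABPrimeFilter α β M where
  isUpperSet a b hab ha := hM.mem_of_prop_insert fun n => (hM.prop (n + 1)).2.1 a ha b hab
  glb_mem A hA hA_card m hm :=
    hM.mem_of_prop_insert fun n => (hM.prop (n + 1)).2.2.1 A hA hA_card m hm
  exists_mem_of_lub_mem B hB_card j hj hjM := by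
    obtain ⟨b, hb, hwin⟩ := IsChain.singleton.exists_mem_forall_winAll_insert hβfin
      (by simpa using hM.prop) hB_card hj (mem_singleton M) hjM
    exact ⟨b, hb, hM.mem_of_prop_insert (hwin M rfl hjM)⟩

theorem exists_isABPrimeFilter_of_winAll (hαfin : α < ℵ₀) (hβfin : β < ℵ₀) {U : Set P} {q : P}
    (hU : WinAll α β U q) : ∃ F, IsABPrimeFilter α β F ∧ U ⊆ F ∧ q ∉ F := by
  obtain ⟨M, hUM, hM⟩ := zorn_subset_nonempty {V | WinAll α β V q}
    (fun C hCwin hC hne => ⟨⋃₀ C, hC.winAll_sUnion hαfin hβfin hne hCwin,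
      fun _ => subset_sUnion_of_mem⟩) U hU
  exact ⟨M, hM.isABPrimeFilter hβfin, hUM, hM.prop 0⟩

end WinAll

theorem representable_iff_win_of_finite_general (α β : Cardinal.{u})
    (hαfin : α < ℵ₀) (hβfin : β < ℵ₀)
    (P : Type u) [PartialOrder P] :
    IsABRepresentable α β P ↔
      ∀ p q : P, ¬p ≤ q → ∀ n : ℕ, Win α β n {p} q := by
  rw [isABRepresentable_iff_forall_exists_isABPrimeFilter]
  refine forall₂_congr fun p q => imp_congr_right fun _ => ⟨?_, ?_⟩
  · rintro ⟨F, hF, hp, hq⟩ n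
    exact Win.of_subset_isABPrimeFilter hF hq (singleton_subset_iff.2 hp)
  · intro hwin
    obtain ⟨F, hF, hpF, hq⟩ := exists_isABPrimeFilter_of_winAll hαfin hβfin hwin
    exact ⟨F, hF, singleton_subset_iff.1 hpF, hq⟩

theorem representable_iff_win_of_finite (α β : Cardinal.{u})
    (hα2 : 2 ≤ α) (hαfin : α < ℵ₀) (hβ2 : 2 ≤ β) (hβfin : β < ℵ₀)
    (P : Type u) [PartialOrder P] :
    IsABRepresentable α β P ↔
      ∀ p q : P, ¬p ≤ q → ∀ n : ℕ, Win α β n {p} q :=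
  representable_iff_win_of_finite_general α β hαfin hβfin P
end

section
/- Let α, β be cardinals with 2 ≤ α, β ≤ ℵ₀ and let P be a poset. Then P is (α,β)-representable if and only if for all finite cardinals r, s with 2 ≤ r ≤ α and 2 ≤ s ≤ β, all n ∈ ℕ, and all p, q ∈ P with p ≰ q, Win^{r,s}_n({p}, q) holds. -/
open Cardinal

universe u

/-!
Both sides amount to: whenever `p ≰ q` there is an `(α,β)`-prime filter containing `p` but
not `q`. A representation `h` yields one for every point `x`, namely `{u | x ∈ h u}`, and
conversely the evaluation map at all prime filters is a representation.

A prime filter `F` with `p ∈ F ∌ q` is a strategy for `∃` in every game from `({p}, q)`: she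
keeps the position inside `F`. Conversely, if `∃` wins all finite approximations, Zorn's lemma
gives a maximal `F ⊇ {p}` from which she still wins all of them. Since `α, β ≤ ℵ₀`, each move
involves only finitely many elements, so winning is of finite character and chains have upper
bounds; maximality then forces `F` to be a prime filter, a pigeonhole argument over the finitely
many answers to a join move providing one answer that is good in all rounds.
-/

open Set

theorem DirectedOn.exists_mem_forall_of_finite {ι κ : Type*} {r : κ → κ → Prop} [IsTrans κ r]
    {D : Set κ} (hD : DirectedOn r D) (hne : D.Nonempty) {B : Set ι} (hB : B.Finite)
    {Q : ι → κ → Prop} (hQ : ∀ b x y, r x y → Q b y → Q b x)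
    (h : ∀ x ∈ D, ∃ b ∈ B, Q b x) : ∃ b ∈ B, ∀ x ∈ D, Q b x := by
  by_contra! hcon
  choose x hxD hxQ using hcon
  have := hne.to_subtype
  have := hB.to_subtype
  obtain ⟨z, hz⟩ := hD.directed_val.finite_le fun b : B => (⟨x b b.2, hxD b b.2⟩ : D)
  obtain ⟨b, hb, hbz⟩ := h z z.2
  exact hxQ b hb (hQ b _ _ (hz ⟨b, hb⟩) hbz)

theorem exists_ge_lt_min_natCast {c α : Cardinal} (hcα : c < α) (hc : c < ℵ₀) (k : ℕ) :
    ∃ K ≥ k, c < min α ((K + 1 : ℕ) : Cardinal) := by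
  obtain ⟨m, rfl⟩ := lt_aleph0.1 hc
  exact ⟨k + m, by omega, lt_min hcα (by norm_cast; omega)⟩

structure IsABPrimeFilter_s13 (α β : Cardinal.{u}) {P : Type u} [Preorder P] (F : Set P) : Prop where
  isUpperSet : IsUpperSet F
  glb_mem : ∀ A ⊆ F, #A < α → ∀ m, IsGLB A m → m ∈ F
  exists_mem_of_lub_mem : ∀ B : Set P, #B < β → ∀ j, IsLUB B j → j ∈ F → ∃ b ∈ B, b ∈ F

theorem IsABPrimeFilter_s13.mono {α β r s : Cardinal.{u}} {P : Type u} [Preorder P]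
    {F : Set P} (hr : r ≤ α) (hs : s ≤ β)
    (hF : IsABPrimeFilter_s13 α β F) : IsABPrimeFilter_s13 r s F :=
  ⟨hF.isUpperSet, fun A hA hAr => hF.glb_mem A hA (hAr.trans_le hr),
    fun B hB => hF.exists_mem_of_lub_mem B (hB.trans_le hs)⟩

theorem isABRepresentable_iff_separating {α β : Cardinal.{u}} {P : Type u} [PartialOrder P] :
    IsABRepresentable α β P ↔
      ∀ p q : P, ¬p ≤ q → ∃ F, IsABPrimeFilter_s13 α β F ∧ p ∈ F ∧ q ∉ F := by
  constructor
  · rintro ⟨X, h, hord, hinf, hsup⟩ p q hpq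
    obtain ⟨x, hxp, hxq⟩ := not_subset.1 fun hsub => hpq ((hord p q).2 hsub)
    refine ⟨{u | x ∈ h u}, ⟨fun a b hab hx => (hord a b).1 hab hx, ?_, ?_⟩, hxp, hxq⟩
    · intro A hAF hA m hm
      show x ∈ h m
      rw [hinf A m hA hm]
      exact mem_iInter₂.2 fun t ht => hAF ht
    · intro B hB j hj (hxj : x ∈ h j)
      rw [hsup B j hB hj] at hxj
      obtain ⟨b, hb, hxb⟩ := mem_iUnion₂.1 hxj
      exact ⟨b, hb, hxb⟩
  · intro hsep
    refine ⟨{F : Set P // IsABPrimeFilter_s13 α β F}, fun a => {F | a ∈ F.1}, ?_, ?_, ?_⟩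
    · refine fun a b => ⟨fun hab F hF => F.2.isUpperSet hab hF, fun hsub => ?_⟩
      by_contra hab
      obtain ⟨F, hF, haF, hbF⟩ := hsep a b hab
      exact hbF (@hsub ⟨F, hF⟩ haF)
    · intro S m hS hm
      ext F
      simp only [mem_iInter₂]
      exact ⟨fun hmF s hs => F.2.isUpperSet (hm.1 hs) hmF,
        fun hSF => F.2.glb_mem S (fun s hs => hSF s hs) hS m hm⟩
    · intro T j hT hj
      ext F
      simp only [mem_iUnion₂, exists_prop]
      exact ⟨F.2.exists_mem_of_lub_mem T hT j hj,
        fun ⟨t, ht, htF⟩ => F.2.isUpperSet (hj.1 ht) htF⟩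

section Win

variable {P : Type u} [PartialOrder P]

theorem Win.mono {r s r' s' : Cardinal.{u}} {n n' : ℕ} {U U' : Set P} {q : P}
    (hr : r' ≤ r) (hs : s' ≤ s) (hn : n' ≤ n) (hU : U' ⊆ U) :
    Win r s n U q → Win r' s' n' U' q := by
  induction n' generalizing n U U' with
  | zero =>
    rcases n with _ | n
    exacts [fun hw hq => hw (hU hq), fun hw hq => hw.1 (hU hq)]
  | succ n' ih =>
    obtain ⟨n, rfl⟩ : ∃ m, n = m + 1 := ⟨n - 1, by omega⟩
    rintro ⟨hq, hup, hinf, hsup⟩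
    have ih' {x : P} : Win r s n (insert x U) q → Win r' s' n' (insert x U') q :=
      ih (by omega) (insert_subset_insert hU)
    refine ⟨fun h => hq (hU h), fun a ha b hab => ih' (hup a (hU ha) b hab),
      fun A hA hAr m hm => ih' (hinf A (hA.trans hU) (hAr.trans_le hr) m hm),
      fun B hB j hj hjU => ?_⟩
    obtain ⟨b, hb, hw⟩ := hsup B (hB.trans_le hs) j hj (hU hjU)
    exact ⟨b, hb, ih' hw⟩

theorem IsABPrimeFilter_s13.win {r s : Cardinal.{u}} {F U : Set P} {q : P}
    (hF : IsABPrimeFilter_s13 r s F) (hUF : U ⊆ F) (hqF : q ∉ F) (n : ℕ) : Win r s n U q := by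
  induction n generalizing U with
  | zero => exact fun hqU => hqF (hUF hqU)
  | succ n ih =>
    refine ⟨fun hqU => hqF (hUF hqU),
      fun a ha b hab => ih (insert_subset (hF.isUpperSet hab (hUF ha)) hUF),
      fun A hAU hA m hm => ih (insert_subset (hF.glb_mem A (hAU.trans hUF) hA m hm) hUF),
      fun B hB j hj hjU => ?_⟩
    obtain ⟨b, hb, hbF⟩ := hF.exists_mem_of_lub_mem B hB j hj (hUF hjU)
    exact ⟨b, hb, ih (insert_subset hbF hUF)⟩

theorem win_of_forall_finite {r s : Cardinal.{u}} (hr : r ≤ ℵ₀) (hs : s < ℵ₀) {q : P} (n : ℕ)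
    {U : Set P} (hU : ∀ V ⊆ U, V.Finite → Win r s n V q) : Win r s n U q := by
  induction n generalizing U with
  | zero => exact fun hqU => hU {q} (singleton_subset_iff.2 hqU) (finite_singleton q) rfl
  | succ n ih =>
    -- a finite `V ⊆ insert b U` lies in `insert b (V ∩ U)`, with `V ∩ U` finite
    have insert_win {b : P} (h : ∀ W ⊆ U, W.Finite → Win r s n (insert b W) q) :
        Win r s n (insert b U) q :=
      ih fun V hV hVfin => Win.mono le_rfl le_rfl le_rfl
        (fun x hx => (hV hx).imp_right fun hxU => ⟨hx, hxU⟩)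
        (h (V ∩ U) inter_subset_right (hVfin.inter_of_left U))
    refine ⟨fun hqU => (hU {q} (singleton_subset_iff.2 hqU) (finite_singleton q)).1 rfl,
      fun a ha b hab => insert_win fun W hW hWfin => ?_,
      fun A hAU hA m hm => insert_win fun W hW hWfin => ?_, fun B hB j hj hjU => ?_⟩
    · exact Win.mono le_rfl le_rfl le_rfl (insert_subset_insert (subset_insert a W))
        ((hU _ (insert_subset ha hW) (hWfin.insert a)).2.1 a (mem_insert a W) b hab)
    · have hAfin : A.Finite := lt_aleph0_iff_set_finite.1 (hA.trans_le hr)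
      exact Win.mono le_rfl le_rfl le_rfl (insert_subset_insert subset_union_right)
        ((hU _ (union_subset hAU hW) (hAfin.union hWfin)).2.2.1 A subset_union_left hA m hm)
    · have hBfin : B.Finite := lt_aleph0_iff_set_finite.1 (hB.trans hs)
      have hdir : DirectedOn (· ⊆ ·) {W | W ⊆ U ∧ W.Finite} := fun W₁ h₁ W₂ h₂ =>
        ⟨W₁ ∪ W₂, ⟨union_subset h₁.1 h₂.1, h₁.2.union h₂.2⟩, subset_union_left, subset_union_right⟩
      obtain ⟨b, hb, hwin⟩ := hdir.exists_mem_forall_of_finite ⟨∅, empty_subset U, finite_empty⟩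
        hBfin (Q := fun b W => Win r s n (insert b (insert j W)) q)
        (fun b W W' hWW' => Win.mono le_rfl le_rfl le_rfl
          (insert_subset_insert (insert_subset_insert hWW')))
        fun W hW => (hU _ (insert_subset hjU hW.1) (hW.2.insert j)).2.2.2 B hB j hj
          (mem_insert j W)
      exact ⟨b, hb, insert_win fun W hW hWfin => Win.mono le_rfl le_rfl le_rfl
        (insert_subset_insert (subset_insert j W)) (hwin W ⟨hW, hWfin⟩)⟩

theorem win_min_of_le {α β : Cardinal.{u}} {U : Set P} {q : P} {k K n : ℕ} (hkK : k ≤ K)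
    (hkn : k ≤ n) (h : Win (min α K) (min β K) n U q) : Win (min α k) (min β k) k U q :=
  Win.mono (min_le_min_left α (Nat.cast_le.2 hkK)) (min_le_min_left β (Nat.cast_le.2 hkK)) hkn
    subset_rfl h

/-- Truncating both cardinals at the number of rounds gives one sequence of games which, by
`Win.mono`, is cofinal among all finite parameters `(r, s, n)`. -/
def WinAllStages (α β : Cardinal.{u}) (U : Set P) (q : P) : Prop :=
  ∀ k : ℕ, Win (min α k) (min β k) k U q

theorem winAllStages_of_forall_win {α β : Cardinal.{u}} (hα : 2 ≤ α) (hβ : 2 ≤ β) {U : Set P}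
    {q : P} (H : ∀ r s : Cardinal.{u}, r < ℵ₀ → s < ℵ₀ → 2 ≤ r → r ≤ α → 2 ≤ s → s ≤ β →
      ∀ n : ℕ, Win r s n U q) : WinAllStages α β U q := by
  intro k
  have h2K : (2 : Cardinal.{u}) ≤ (max k 2 : ℕ) := by exact_mod_cast le_max_right k 2
  exact win_min_of_le (le_max_left k 2) (le_max_left k 2)
    (H _ _ (min_lt_of_right_lt natCast_lt_aleph0) (min_lt_of_right_lt natCast_lt_aleph0)
      (le_min hα h2K) (min_le_left _ _) (le_min hβ h2K) (min_le_left _ _) _)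

theorem exists_maximal_winAllStages {α β : Cardinal.{u}} {U : Set P} {q : P}
    (hU : WinAllStages α β U q) : ∃ F, U ⊆ F ∧ Maximal (WinAllStages α β · q) F := by
  refine zorn_subset_nonempty {V | WinAllStages α β V q} (fun c hc hchain hne =>
    ⟨⋃₀ c, fun k => ?_, fun V hV => subset_sUnion_of_mem hV⟩) U hU
  refine win_of_forall_finite (min_le_right _ _ |>.trans natCast_lt_aleph0.le)
    (min_lt_of_right_lt natCast_lt_aleph0) k fun V hV hVfin => ?_
  obtain ⟨W, hWc, hVW⟩ :=
    hchain.directedOn.exists_mem_subset_of_finite_of_subset_sUnion hne hVfin hV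
  exact Win.mono le_rfl le_rfl le_rfl hVW (hc hWc k)

theorem isABPrimeFilter_of_maximal {α β : Cardinal.{u}} (hα : α ≤ ℵ₀) (hβ : β ≤ ℵ₀) {F : Set P}
    {q : P} (hF : Maximal (WinAllStages α β · q) F) : IsABPrimeFilter_s13 α β F := by
  have mem_of_winAllStages {x : P} (hx : WinAllStages α β (insert x F) q) : x ∈ F :=
    hF.2 hx (subset_insert x F) (mem_insert x F)
  refine ⟨fun a b hab ha => mem_of_winAllStages fun k =>
      win_min_of_le k.le_succ le_rfl ((hF.1 (k + 1)).2.1 a ha b hab),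
    fun A hAF hA m hm => mem_of_winAllStages fun k => ?_, fun B hB j hj hjF => ?_⟩
  · obtain ⟨K, hkK, hAK⟩ := exists_ge_lt_min_natCast hA (hA.trans_le hα) k
    exact win_min_of_le (by omega) hkK ((hF.1 (K + 1)).2.2.1 A hAF hAK m hm)
  · have hround (k : ℕ) : ∃ b ∈ B, Win (min α k) (min β k) k (insert b F) q := by
      obtain ⟨K, hkK, hBK⟩ := exists_ge_lt_min_natCast hB (hB.trans_le hβ) k
      obtain ⟨b, hb, hw⟩ := (hF.1 (K + 1)).2.2.2 B hBK j hj hjF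
      exact ⟨b, hb, win_min_of_le (by omega) hkK hw⟩
    obtain ⟨b, hb, hwin⟩ := (directedOn_univ (r := (· ≤ ·))).exists_mem_forall_of_finite
      univ_nonempty (lt_aleph0_iff_set_finite.1 (hB.trans_le hβ))
      (Q := fun b (k : ℕ) => Win (min α k) (min β k) k (insert b F) q)
      (fun b k K hkK => win_min_of_le hkK hkK)
      fun k _ => hround k
    exact ⟨b, hb, mem_of_winAllStages fun k => hwin k (mem_univ k)⟩

end Win

theorem representable_iff_win_finite_approx (α β : Cardinal.{u})
    (hα2 : 2 ≤ α) (hαω : α ≤ ℵ₀) (hβ2 : 2 ≤ β) (hβω : β ≤ ℵ₀)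
    (P : Type u) [PartialOrder P] :
    IsABRepresentable α β P ↔
      ∀ r s : Cardinal.{u}, r < ℵ₀ → s < ℵ₀ → 2 ≤ r → r ≤ α → 2 ≤ s → s ≤ β →
        ∀ n : ℕ, ∀ p q : P, ¬p ≤ q → Win r s n {p} q := by
  rw [isABRepresentable_iff_separating]
  constructor
  · rintro hsep r s - - - hrα - hsβ n p q hpq
    obtain ⟨F, hF, hpF, hqF⟩ := hsep p q hpq
    exact (hF.mono hrα hsβ).win (singleton_subset_iff.2 hpF) hqF n
  · intro hwin p q hpq
    obtain ⟨F, hpF, hFmax⟩ := exists_maximal_winAllStages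
      (winAllStages_of_forall_win hα2 hβ2 fun r s hr hs h2r hrα h2s hsβ n =>
        hwin r s hr hs h2r hrα h2s hsβ n p q hpq)
    exact ⟨F, isABPrimeFilter_of_maximal hαω hβω hFmax, singleton_subset_iff.1 hpF, hFmax.1 0⟩
end

section
/- Let S be a meet-semilattice and let k be a cardinal with 2 ≤ k ≤ ℵ₀. Then S is k-distributive if and only if for all a, b ∈ S with a ≰ b, Win^{3,k}_5({a}, b) holds; that is, if and only if player ∃ has a 5-strategy in the (3,k)-game with starting position ({a}, {b}) for every pair a ≰ b. -/
open Cardinal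

universe u

/-- A meet-semilattice `S` is `k`-distributive if for all `0 < m < k` and
`x, y₁, …, y_m ∈ S`, whenever `y₁ ∨ ⋯ ∨ y_m` exists in `S`, then
`(x ⊓ y₁) ∨ ⋯ ∨ (x ⊓ y_m)` exists and equals `x ⊓ (y₁ ∨ ⋯ ∨ y_m)`. -/
def IsKDistributive (k : Cardinal.{u}) (S : Type u) [SemilatticeInf S] : Prop :=
  ∀ m : ℕ, 0 < m → (m : Cardinal.{u}) < k →
    ∀ (x : S) (y : Fin m → S) (j : S), IsLUB (Set.range y) j →
      IsLUB (Set.range fun i => x ⊓ y i) (x ⊓ j)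

section Aux

variable {S : Type u} [SemilatticeInf S]

/-- The invariant maintained by player ∃: `U` is nonempty and the meet of every
nonempty finite subset of `U` is not below `q`. -/
def GameInv (U : Set S) (q : S) : Prop :=
  U.Nonempty ∧ ∀ (F : Finset S) (hF : F.Nonempty), ↑F ⊆ U → ¬ F.inf' hF id ≤ q

lemma GameInv.not_mem {U : Set S} {q : S} (h : GameInv U q) : q ∉ U := fun hq =>
  h.2 {q} (Finset.singleton_nonempty q) (by simpa) (by simp)

lemma GameInv.insert {U : Set S} {q b : S} (h : GameInv U q) (W : Finset S)
    (hW : W.Nonempty) (hWU : ↑W ⊆ U) (hWb : W.inf' hW id ≤ b) :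
    GameInv (insert b U) q := by
  classical
  refine ⟨Set.insert_nonempty b U, ?_⟩
  intro F hF hFU hle
  set F' : Finset S := W ∪ F.erase b with hF'def
  have hWF' : W ⊆ F' := Finset.subset_union_left
  have hF' : F'.Nonempty := hW.mono hWF'
  have hF'U : ↑F' ⊆ U := by
    intro z hz
    rcases Finset.mem_union.mp hz with hz | hz
    · exact hWU hz
    · obtain ⟨hzb, hzF⟩ := Finset.mem_erase.mp hz
      rcases hFU hzF with h' | h'
      · exact absurd h' hzb
      · exact h'
  have hle' : F'.inf' hF' id ≤ F.inf' hF id := by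
    refine Finset.le_inf' hF _ ?_
    intro u hu
    by_cases hub : u = b
    · subst hub
      refine le_trans ?_ hWb
      exact Finset.le_inf' hW _ fun w hw => Finset.inf'_le _ (hWF' hw)
    · exact Finset.inf'_le _ (Finset.mem_union_right _ (Finset.mem_erase.mpr ⟨hub, hu⟩))
  exact h.2 F' hF' hF'U (hle'.trans hle)

lemma gameInv_win {k : Cardinal.{u}} (hk : k ≤ ℵ₀) (hd : IsKDistributive k S) :
    ∀ (n : ℕ) (U : Set S) (q : S), GameInv U q → Win 3 k n U q := by
  classical
  intro n
  induction n with
  | zero => intro U q h; exact h.not_mem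
  | succ n ih =>
    intro U q h
    refine ⟨h.not_mem, ?_, ?_, ?_⟩
    · -- upward move
      intro a ha b hab
      exact ih _ _ (h.insert {a} (Finset.singleton_nonempty a) (by simpa) (by simpa))
    · -- meet move
      intro A hAU hA3 m hm
      rcases A.eq_empty_or_nonempty with rfl | hA
      · obtain ⟨u, hu⟩ := h.1
        have htop : u ≤ m := hm.2 (fun z hz => hz.elim)
        exact ih _ _ (h.insert {u} (Finset.singleton_nonempty u) (by simpa) (by simpa))
      · have hfin : A.Finite := by
          refine Cardinal.lt_aleph0_iff_set_finite.mp (hA3.trans ?_)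
          exact_mod_cast Cardinal.nat_lt_aleph0 3
        set W : Finset S := hfin.toFinset with hWdef
        have hWA : ↑W = A := hfin.coe_toFinset
        have hWne : W.Nonempty := by
          rw [← Finset.coe_nonempty, hWA]; exact hA
        have hlb : W.inf' hWne id ∈ lowerBounds A := by
          intro z hz
          exact Finset.inf'_le _ (hfin.mem_toFinset.mpr hz)
        exact ih _ _ (h.insert W hWne (hWA ▸ hAU) (hm.2 hlb))
    · -- join move
      intro B hBk j hj hjU
      rcases B.eq_empty_or_nonempty with rfl | hB
      · exact absurd (hj.2 (fun z hz => hz.elim))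
          (by simpa using h.2 {j} (Finset.singleton_nonempty j) (by simpa))
      · have hfin : B.Finite := Cardinal.lt_aleph0_iff_set_finite.mp (hBk.trans_le hk)
        have key : ∃ b ∈ B, GameInv (insert b U) q := by
          by_contra hcon
          push_neg at hcon
          have hFb : ∀ b ∈ B, ∃ (F : Finset S) (hF : F.Nonempty),
              ↑F ⊆ insert b U ∧ F.inf' hF id ≤ q := by
            intro b hb
            have h2 := not_and.mp (hcon b hb) (Set.insert_nonempty b U)
            push_neg at h2
            exact h2
          choose F hFne hFsub hFle using hFb
          set B' : Finset S := hfin.toFinset with hB'def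
          have hmemB' : ∀ {b}, b ∈ B' ↔ b ∈ B := fun {b} => hfin.mem_toFinset
          set E : S → Finset S := fun b => if hb : b ∈ B then (F b hb).erase b else ∅
            with hEdef
          set H : Finset S := insert j (B'.biUnion E) with hHdef
          have hjH : j ∈ H := Finset.mem_insert_self _ _
          have hHne : H.Nonempty := ⟨j, hjH⟩
          have hHU : ↑H ⊆ U := by
            intro z hz
            rcases Finset.mem_insert.mp hz with rfl | hz
            · exact hjU
            · obtain ⟨b, hb, hzb⟩ := Finset.mem_biUnion.mp hz
              have hbB : b ∈ B := hmemB'.mp hb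
              rw [hEdef] at hzb
              simp only [dif_pos hbB] at hzb
              obtain ⟨hzeq, hzF⟩ := Finset.mem_erase.mp hzb
              rcases hFsub b hbB hzF with h' | h'
              · exact absurd h' hzeq
              · exact h'
          set x : S := H.inf' hHne id with hxdef
          have claim : ∀ b ∈ B, x ⊓ b ≤ q := by
            intro b hb
            refine le_trans ?_ (hFle b hb)
            refine Finset.le_inf' (hFne b hb) _ ?_
            intro u hu
            by_cases hub : u = b
            · subst hub; exact inf_le_right
            · have huH : u ∈ H := by
                refine Finset.mem_insert_of_mem (Finset.mem_biUnion.mpr ⟨b, hmemB'.mpr hb, ?_⟩)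
                rw [hEdef]
                simp only [dif_pos hb]
                exact Finset.mem_erase.mpr ⟨hub, hu⟩
              exact le_trans inf_le_left (Finset.inf'_le _ huH)
          -- set up distributivity
          have hB'ne : B'.Nonempty := by
            rw [hB'def, Set.Finite.toFinset_nonempty]; exact hB
          have hpos : 0 < B'.card := Finset.card_pos.mpr hB'ne
          set y : Fin B'.card → S := fun i => (B'.equivFin.symm i : S) with hydef
          have hrange : Set.range y = B := by
            ext z
            constructor
            · rintro ⟨i, rfl⟩
              exact hmemB'.mp (B'.equivFin.symm i).2
            · intro hz
              exact ⟨B'.equivFin ⟨z, hmemB'.mpr hz⟩, by simp [hydef]⟩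
          have hcard : (B'.card : Cardinal.{u}) < k := by
            have h1 : (↑B' : Set S) = B := hfin.coe_toFinset
            calc (B'.card : Cardinal.{u}) = #(↑B' : Set S) := (Cardinal.mk_coe_finset).symm
              _ = #B := by rw [h1]
              _ < k := hBk
          have hlub : IsLUB (Set.range y) j := hrange ▸ hj
          have hdist := hd B'.card hpos hcard x y j hlub
          have hxjq : x ⊓ j ≤ q := by
            refine hdist.2 ?_
            rintro z ⟨i, rfl⟩
            exact claim (y i) (hrange ▸ Set.mem_range_self i)
          have hxj : x ≤ j := Finset.inf'_le _ hjH
          have hxq : x ≤ q := le_trans (le_inf le_rfl hxj) hxjq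
          exact h.2 H hHne hHU hxq
        obtain ⟨b, hb, hinv⟩ := key
        exact ⟨b, hb, ih _ _ hinv⟩

end Aux

theorem kDistributive_iff_win_five (S : Type u) [SemilatticeInf S]
    (k : Cardinal.{u}) (hk2 : 2 ≤ k) (hkω : k ≤ ℵ₀) :
    IsKDistributive k S ↔ ∀ a b : S, ¬a ≤ b → Win 3 k 5 {a} b := by
  constructor
  · intro hd a b hab
    refine gameInv_win hkω hd 5 {a} b ⟨⟨a, rfl⟩, ?_⟩
    intro F hF hsub hle
    have ha : a ≤ F.inf' hF id := by
      refine Finset.le_inf' hF _ ?_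
      intro z hz
      have : z = a := Set.mem_singleton_iff.mp (hsub hz)
      rw [this]
      exact le_rfl
    exact hab (ha.trans hle)
  · intro hw m hm hmk x y j hj
    constructor
    · rintro z ⟨i, rfl⟩
      exact inf_le_inf_left x (hj.1 (Set.mem_range_self i))
    · intro c hc
      classical
      by_contra hnc
      obtain ⟨-, h1, -, -⟩ := hw (x ⊓ j) c hnc
      obtain ⟨-, -, -, h3⟩ := h1 (x ⊓ j) rfl j inf_le_right
      have hrk : #(Set.range y) < k := by
        refine lt_of_le_of_lt ?_ hmk
        simpa using Cardinal.mk_range_le_lift (f := y)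
      obtain ⟨b, ⟨i, rfl⟩, hwin3⟩ := h3 (Set.range y) hrk j hj
        (Set.mem_insert _ _)
      obtain ⟨-, -, h2, -⟩ := hwin3
      have hAsub : ({x ⊓ j, y i} : Set S) ⊆ insert (y i) (insert j {x ⊓ j}) := by
        rintro z (rfl | rfl) <;> simp
      have hAcard : #({x ⊓ j, y i} : Set S) < 3 := by
        have hb : #({x ⊓ j, y i} : Set S) ≤ 2 := by
          have h4 := Cardinal.mk_insert_le (s := ({y i} : Set S)) (a := x ⊓ j)
          rw [Cardinal.mk_singleton] at h4
          exact h4.trans (by norm_num)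
        exact hb.trans_lt (by norm_num)
      obtain ⟨-, h1', -, -⟩ := h2 {x ⊓ j, y i} hAsub hAcard ((x ⊓ j) ⊓ y i) isGLB_pair
      have hle : (x ⊓ j) ⊓ y i ≤ c := by
        have hyij : y i ≤ j := hj.1 (Set.mem_range_self i)
        have : (x ⊓ j) ⊓ y i = x ⊓ y i := by
          rw [inf_assoc, inf_eq_right.mpr hyij]
        rw [this]
        exact hc (Set.mem_range_self i)
      obtain ⟨hne, -, -, -⟩ := h1' ((x ⊓ j) ⊓ y i) (Set.mem_insert _ _) c hle
      exact hne (Set.mem_insert _ _)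
end

section
/- Let S be a meet-semilattice and let k be a cardinal with 2 ≤ k ≤ ℵ₀. Then S is k-distributive if and only if for all a, b ∈ S with a ≰ b there exists an (ℵ₀,k)-filter Γ of S (regarded as a poset) with a ∈ Γ and b ∉ Γ. -/
open Cardinal

universe u

theorem kDistributive_iff_separating_filters (S : Type u) [SemilatticeInf S]
    (k : Cardinal.{u}) (hk2 : 2 ≤ k) (hkω : k ≤ ℵ₀) :
    IsKDistributive k S ↔
      ∀ a b : S, ¬a ≤ b → ∃ Γ : Set S, IsABFilter ℵ₀ k Γ ∧ a ∈ Γ ∧ b ∉ Γ := by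
  constructor
  · -- forward direction
    intro hD a b hab
    set C : Set (Set S) := {F | a ∈ F ∧ b ∉ F ∧ (∀ x ∈ F, ∀ y, x ≤ y → y ∈ F) ∧
      ∀ x ∈ F, ∀ y ∈ F, x ⊓ y ∈ F} with hC
    have hbase : Set.Ici a ∈ C :=
      ⟨le_refl a, hab, fun x hx y hxy => le_trans hx hxy, fun x hx y hy => le_inf hx hy⟩
    have hchain : ∀ c ⊆ C, IsChain (· ⊆ ·) c → c.Nonempty →
        ∃ ub ∈ C, ∀ s ∈ c, s ⊆ ub := by
      intro c hc hchain ⟨F0, hF0⟩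
      refine ⟨⋃₀ c, ⟨⟨F0, hF0, (hc hF0).1⟩, ?_, ?_, ?_⟩, fun s hs => Set.subset_sUnion_of_mem hs⟩
      · rintro ⟨F, hF, hbF⟩; exact (hc hF).2.1 hbF
      · rintro x ⟨F, hF, hxF⟩ y hxy
        exact ⟨F, hF, (hc hF).2.2.1 x hxF y hxy⟩
      · rintro x ⟨F, hF, hxF⟩ y ⟨G, hG, hyG⟩
        rcases hchain.total hF hG with h | h
        · exact ⟨G, hG, (hc hG).2.2.2 x (h hxF) y hyG⟩
        · exact ⟨F, hF, (hc hF).2.2.2 x hxF y (h hyG)⟩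
    obtain ⟨Γ, hsub, hmaxl⟩ := zorn_subset_nonempty C hchain (Set.Ici a) hbase
    obtain ⟨haΓ, hbΓ, hup, hmeet⟩ := hmaxl.prop
    -- key maximality property
    have key : ∀ t ∉ Γ, ∃ g ∈ Γ, g ⊓ t ≤ b := by
      intro t ht
      by_contra hcon
      push_neg at hcon
      set F' : Set S := {z | ∃ g ∈ Γ, g ⊓ t ≤ z} with hF'
      have hΓF' : Γ ⊆ F' := fun z hz => ⟨z, hz, inf_le_left⟩
      have hF'C : F' ∈ C := by
        refine ⟨hΓF' haΓ, ?_, ?_, ?_⟩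
        · rintro ⟨g, hg, hgb⟩; exact hcon g hg hgb
        · rintro x ⟨g, hg, hgx⟩ y hxy; exact ⟨g, hg, hgx.trans hxy⟩
        · rintro x ⟨g1, hg1, hg1x⟩ y ⟨g2, hg2, hg2y⟩
          refine ⟨g1 ⊓ g2, hmeet g1 hg1 g2 hg2, le_inf ?_ ?_⟩
          · exact le_trans (inf_le_inf_right t inf_le_left) hg1x
          · exact le_trans (inf_le_inf_right t inf_le_right) hg2y
      have : F' = Γ := hmaxl.eq_of_ge hF'C hΓF'
      exact ht (this ▸ (⟨a, haΓ, inf_le_right⟩ : t ∈ F'))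
    refine ⟨Γ, ⟨hup, ?_, ?_⟩, haΓ, hbΓ⟩
    · -- closed under existing finite infima
      intro T m hTΓ hTcard hglb
      have hfin : T.Finite := Cardinal.lt_aleph0_iff_set_finite.1 hTcard
      rcases T.eq_empty_or_nonempty with rfl | hne
      · have : a ≤ m := hglb.2 (by simp [lowerBounds])
        exact hup a haΓ m this
      · set F := hfin.toFinset with hF
        have hFne : F.Nonempty := by simpa [hF] using hne
        have hglb' : IsGLB (↑F : Set S) (F.inf' hFne id) := by
          constructor
          · intro z hz; exact Finset.inf'_le id hz
          · intro z hz; exact Finset.le_inf' hFne id fun t ht => hz ht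
        rw [hfin.coe_toFinset] at hglb'
        have hm : m = F.inf' hFne id := hglb.unique hglb'
        rw [hm]
        exact Finset.inf'_mem Γ (fun x hx y hy => hmeet x hx y hy) F hFne id
          (fun i hi => hTΓ (by simpa [hF] using hi))
    · -- sup condition
      intro T j hT hlub hdisj hjΓ
      have hfin : T.Finite := Cardinal.lt_aleph0_iff_set_finite.1 (hT.trans_le hkω)
      rcases T.eq_empty_or_nonempty with rfl | hne
      · have : j ≤ b := hlub.2 (by simp [upperBounds])
        exact hbΓ (hup j hjΓ b this)
      · obtain ⟨n, f, hfr⟩ := hfin.fin_embedding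
        have hnpos : 0 < n := by
          rcases hne with ⟨t, ht⟩
          rw [← hfr] at ht
          rcases ht with ⟨i, _⟩
          exact i.pos
        have hnk : (n : Cardinal.{u}) < k := by
          have : #T = (n : Cardinal.{u}) := by
            rw [← hfr]
            have := Cardinal.mk_range_eq_of_injective (f := (f : Fin n → S)) f.injective
            simpa using this
          rwa [this] at hT
        have hfΓ : ∀ i : Fin n, f i ∉ Γ := by
          intro i hi
          have hfT : f i ∈ T := hfr ▸ Set.mem_range_self i
          have : f i ∈ T ∩ Γ := ⟨hfT, hi⟩
          simp [hdisj] at this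
        choose g hgΓ hgb using fun i => key (f i) (hfΓ i)
        have huniv : (Finset.univ : Finset (Fin n)).Nonempty := by
          simpa [Finset.univ_nonempty_iff] using Fin.pos_iff_nonempty.1 hnpos
        set G := Finset.univ.inf' huniv g with hG
        have hGΓ : G ∈ Γ :=
          Finset.inf'_mem Γ (fun x hx y hy => hmeet x hx y hy) _ huniv g (fun i _ => hgΓ i)
        have hlubf : IsLUB (Set.range fun i => f i) j := by
          rw [show Set.range (fun i => f i) = T from hfr]; exact hlub
        have hdist := hD n hnpos hnk G (fun i => f i) j hlubf
        have hGjb : G ⊓ j ≤ b := by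
          apply hdist.2
          rintro _ ⟨i, rfl⟩
          calc G ⊓ f i ≤ g i ⊓ f i :=
                inf_le_inf_right _ (Finset.inf'_le g (Finset.mem_univ i))
            _ ≤ b := hgb i
        exact hbΓ (hup _ (hmeet G hGΓ j hjΓ) b hGjb)
  · -- reverse direction
    intro hsep m hm hmk x y j hj
    constructor
    · rintro _ ⟨i, rfl⟩
      exact inf_le_inf_left x (hj.1 ⟨i, rfl⟩)
    · intro u hu
      by_contra hne
      obtain ⟨Γ, ⟨hup, hinf, hsup⟩, hxj, hbu⟩ := hsep _ _ hne
      have hxΓ : x ∈ Γ := hup _ hxj _ inf_le_left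
      have hjΓ : j ∈ Γ := hup _ hxj _ inf_le_right
      have hT : #(Set.range y) < k := by
        refine lt_of_le_of_lt ?_ hmk
        have := Cardinal.mk_range_le_lift (f := y)
        simpa using this
      have hne' : Set.range y ∩ Γ ≠ ∅ := fun h => hsup _ j hT hj h hjΓ
      obtain ⟨t, ⟨i, rfl⟩, htΓ⟩ := Set.nonempty_iff_ne_empty.2 hne'
      have hpair : x ⊓ y i ∈ Γ := by
        refine hinf {x, y i} _ ?_ ?_ isGLB_pair
        · rintro z (rfl | rfl) <;> assumption
        · exact Cardinal.lt_aleph0_iff_set_finite.2 (Set.toFinite _)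
      exact hbu (hup _ hpair u (hu ⟨i, rfl⟩))
end

section
/- Let L be a lattice. Then L is distributive if and only if for all a, b ∈ L with a ≰ b, Win^{3,3}_5({a}, b) holds; that is, if and only if player ∃ has a 5-strategy in the (3,3)-game with starting position ({a}, {b}) for every pair a ≰ b. -/
open Cardinal

universe u

section Aux

variable {L : Type u} [Lattice L]

lemma aux_inf'_mem (F : Set L) (hinf : ∀ x ∈ F, ∀ y ∈ F, x ⊓ y ∈ F) :
    ∀ (s : Finset L) (hs : s.Nonempty), ↑s ⊆ F → s.inf' hs id ∈ F := by
  intro s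
  induction s using Finset.cons_induction with
  | empty => intro hs; exact absurd hs (by simp)
  | cons a s ha ih =>
    intro hs hsub
    rcases s.eq_empty_or_nonempty with rfl | hs'
    · simpa using hsub (by simp)
    · rw [Finset.inf'_cons hs']
      exact hinf _ (hsub (by simp)) _ (ih hs' fun x hx => hsub (by simp [hx]))

lemma aux_sup'_mem (F : Set L) (hprime : ∀ x y : L, x ⊔ y ∈ F → x ∈ F ∨ y ∈ F) :
    ∀ (s : Finset L) (hs : s.Nonempty), s.sup' hs id ∈ F → ∃ b ∈ s, b ∈ F := by
  intro s
  induction s using Finset.cons_induction with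
  | empty => intro hs; exact absurd hs (by simp)
  | cons a s ha ih =>
    intro hs hmem
    rcases s.eq_empty_or_nonempty with rfl | hs'
    · exact ⟨a, by simp, by simpa using hmem⟩
    · rw [Finset.sup'_cons hs'] at hmem
      rcases hprime _ _ hmem with h | h
      · exact ⟨a, by simp, h⟩
      · obtain ⟨b, hb, hbF⟩ := ih hs' h
        exact ⟨b, by simp [hb], hbF⟩

/-- If `F` is a (nonempty) prime filter (as a set) with `q ∉ F`, then ∃ wins from any
position contained in `F`. -/
lemma win_of_prime_filter (F : Set L)
    (hup : ∀ x ∈ F, ∀ y, x ≤ y → y ∈ F)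
    (hinf : ∀ x ∈ F, ∀ y ∈ F, x ⊓ y ∈ F)
    (hprime : ∀ x y : L, x ⊔ y ∈ F → x ∈ F ∨ y ∈ F)
    (hne : F.Nonempty) {q : L} (hq : q ∉ F) :
    ∀ (n : ℕ) (U : Set L), U ⊆ F → Win 3 3 n U q := by
  intro n
  induction n with
  | zero => intro U hU hqU; exact hq (hU hqU)
  | succ n ih =>
    intro U hU
    refine ⟨fun hqU => hq (hU hqU), ?_, ?_, ?_⟩
    · intro a haU b hab
      exact ih _ (Set.insert_subset (hup a (hU haU) b hab) hU)
    · intro A hAU hA m hm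
      have hAfin : A.Finite := by
        refine Cardinal.lt_aleph0_iff_set_finite.mp (hA.trans ?_)
        exact Cardinal.nat_lt_aleph0 3
      rcases A.eq_empty_or_nonempty with rfl | hA'
      · obtain ⟨f, hf⟩ := hne
        have : f ≤ m := hm.2 (by simp)
        exact ih _ (Set.insert_subset (hup f hf m this) hU)
      · have hsne : hAfin.toFinset.Nonempty := by
          simpa [Set.Finite.toFinset_nonempty] using hA'
        have hsub : ↑hAfin.toFinset ⊆ F := by
          rw [Set.Finite.coe_toFinset]; exact hAU.trans hU
        have hmem := aux_inf'_mem F hinf hAfin.toFinset hsne hsub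
        have hmm : m = hAfin.toFinset.inf' hsne id := by
          apply le_antisymm
          · exact Finset.le_inf' hsne id fun i hi => hm.1 (by simpa using hi)
          · exact hm.2 fun i hi => Finset.inf'_le id (by simpa using hi)
        rw [hmm]
        exact ih _ (Set.insert_subset hmem hU)
    · intro B hB j hj hjU
      have hBfin : B.Finite := by
        refine Cardinal.lt_aleph0_iff_set_finite.mp (hB.trans ?_)
        exact Cardinal.nat_lt_aleph0 3
      rcases B.eq_empty_or_nonempty with rfl | hB'
      · exact absurd (hup j (hU hjU) q (hj.2 (by simp))) hq
      · have hsne : hBfin.toFinset.Nonempty := by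
          simpa [Set.Finite.toFinset_nonempty] using hB'
        have hjj : j = hBfin.toFinset.sup' hsne id := by
          apply le_antisymm
          · exact hj.2 fun i hi => Finset.le_sup' id (by simpa using hi)
          · exact Finset.sup'_le hsne id fun i hi => hj.1 (by simpa using hi)
        obtain ⟨b, hb, hbF⟩ := aux_sup'_mem F hprime hBfin.toFinset hsne
          (by rw [← hjj]; exact hU hjU)
        refine ⟨b, by simpa using hb, ih _ (Set.insert_subset hbF hU)⟩

omit [Lattice L] in
lemma mk_pair_lt_three (u v : L) : #({u, v} : Set L) < 3 := by
  have h1 : #({u, v} : Set L) ≤ #({v} : Set L) + 1 := Cardinal.mk_insert_le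
  have h2 : #({v} : Set L) = 1 := Cardinal.mk_singleton v
  rw [h2] at h1
  refine h1.trans_lt ?_
  norm_num

end Aux

theorem lattice_distributive_iff_win_five (L : Type u) [Lattice L] :
    (∀ x y z : L, x ⊓ (y ⊔ z) = (x ⊓ y) ⊔ (x ⊓ z)) ↔
      ∀ a b : L, ¬a ≤ b → Win 3 3 5 {a} b := by
  constructor
  · intro hD a b hab
    letI : DistribLattice L := DistribLattice.ofInfSupLe fun x y z => (hD x y z).le
    -- embed into a bounded distributive lattice
    let e : L → WithTop (WithBot L) := fun x => ((x : WithBot L) : WithTop (WithBot L))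
    have he : ∀ x y : L, e x ≤ e y ↔ x ≤ y := by
      intro x y; simp [e]
    have heinf : ∀ x y : L, e (x ⊓ y) = e x ⊓ e y := by
      intro x y; simp [e, WithBot.coe_inf, WithTop.coe_inf]
    have hesup : ∀ x y : L, e (x ⊔ y) = e x ⊔ e y := by
      intro x y; simp [e, WithBot.coe_sup, WithTop.coe_sup]
    have hdisj : Disjoint ((Order.PFilter.principal (e a) : Order.PFilter _) : Set (WithTop (WithBot L)))
        ((Order.Ideal.principal (e b) : Order.Ideal _) : Set (WithTop (WithBot L))) := by
      rw [Set.disjoint_left]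
      intro x hxF hxI
      have h1 : e a ≤ x := hxF
      have h2 : x ≤ e b := hxI
      exact hab ((he a b).mp (h1.trans h2))
    obtain ⟨J, hJp, hIJ, hJF⟩ :=
      DistribLattice.prime_ideal_of_disjoint_filter_ideal hdisj
    set F : Set L := {x | e x ∉ J} with hF
    have haF : a ∈ F := by
      have : e a ∈ (Order.PFilter.principal (e a) : Order.PFilter _) :=
        Order.PFilter.mem_principal.mpr le_rfl
      exact Set.disjoint_left.mp hJF this
    have hbF : b ∉ F := by
      have : e b ∈ J := hIJ (Order.Ideal.mem_principal_self)
      simpa [hF] using this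
    have hup : ∀ x ∈ F, ∀ y, x ≤ y → y ∈ F := by
      intro x hx y hxy hyJ
      exact hx (J.lower ((he x y).mpr hxy) hyJ)
    have hinf : ∀ x ∈ F, ∀ y ∈ F, x ⊓ y ∈ F := by
      intro x hx y hy hmem
      rw [heinf] at hmem
      rcases hJp.mem_or_mem hmem with h | h
      · exact hx h
      · exact hy h
    have hprime : ∀ x y : L, x ⊔ y ∈ F → x ∈ F ∨ y ∈ F := by
      intro x y hmem
      by_contra h
      push_neg at h
      obtain ⟨hx, hy⟩ := h
      simp only [hF, Set.mem_setOf_eq, not_not] at hx hy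
      refine hmem ?_
      rw [hesup]
      exact Order.Ideal.sup_mem hx hy
    exact win_of_prime_filter F hup hinf hprime ⟨a, haF⟩ hbF 5 {a}
      (Set.singleton_subset_iff.mpr haF)
  · intro H x y z
    refine le_antisymm ?_ le_inf_sup
    by_contra hab
    set a := x ⊓ (y ⊔ z) with ha
    set b := (x ⊓ y) ⊔ (x ⊓ z) with hb
    obtain ⟨-, hup5, -, -⟩ := H a b hab
    have W4 := hup5 a rfl (y ⊔ z) inf_le_right
    obtain ⟨-, -, -, hsup4⟩ := W4
    have hYZ : y ⊔ z ∈ insert (y ⊔ z) ({a} : Set L) := Set.mem_insert _ _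
    obtain ⟨c, hc, W3⟩ := hsup4 {y, z} (mk_pair_lt_three y z) (y ⊔ z) isLUB_pair hYZ
    have hcyz : c ≤ y ⊔ z := by
      rcases hc with rfl | rfl
      · exact le_sup_left
      · exact le_sup_right
    have hxcb : x ⊓ c ≤ b := by
      rcases hc with rfl | rfl
      · exact le_sup_left
      · exact le_sup_right
    obtain ⟨-, -, hinf3, -⟩ := W3
    have hac : a ⊓ c = x ⊓ c := by
      rw [ha, inf_assoc, inf_eq_right.mpr hcyz]
    have hglb : IsGLB ({a, c} : Set L) (x ⊓ c) := by
      rw [← hac]; exact isGLB_pair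
    have hsub : ({a, c} : Set L) ⊆ insert c (insert (y ⊔ z) ({a} : Set L)) := by
      intro t ht
      rcases ht with rfl | rfl
      · exact Set.mem_insert_iff.mpr (Or.inr (Set.mem_insert_iff.mpr (Or.inr rfl)))
      · exact Set.mem_insert _ _
    have W2 := hinf3 {a, c} hsub (mk_pair_lt_three a c) (x ⊓ c) hglb
    obtain ⟨-, hup2, -, -⟩ := W2
    have W1 := hup2 (x ⊓ c) (Set.mem_insert _ _) b hxcb
    exact W1.1 (Set.mem_insert _ _)
end

section
/- A lattice L, regarded as a poset, is (3,3)-representable if and only if L is distributive. -/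
open Cardinal

universe u

/-!
A lattice embedding into a powerset lattice pulls back distributivity, and the `(3,3)`
conditions say exactly that `h` preserves binary meets and joins, the top and the bottom.
Conversely, a distributive lattice embeds in this way into the powerset of its prime ideals,
sending `a` to the prime ideals avoiding it: prime ideals separate points by the prime ideal
theorem, and primality is what turns `a ⊓ b` into an intersection.
-/

open Set

theorem Cardinal.mk_pair_le_two_s17 {α : Type*} (a b : α) : #({a, b} : Set α) ≤ 2 :=
  mk_insert_le.trans (by rw [mk_singleton, one_add_one_eq_two])

theorem Set.eq_empty_or_exists_eq_pair_of_mk_lt_three {α : Type*} {S : Set α} (hS : #S < 3) :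
    S = ∅ ∨ ∃ a b, S = {a, b} := by
  have h3 : S.encard < 3 := toENat_lt_ofNat.mpr hS
  have : S.encard ≤ 1 ∨ S.encard = 2 := by
    generalize S.encard = n at h3 ⊢
    cases n using ENat.recTopCoe with
    | top => simp at h3
    | coe n => norm_cast at h3 ⊢; omega
  rcases this with h1 | h2
  · rcases encard_le_one_iff_eq.mp h1 with h | ⟨a, rfl⟩
    · exact .inl h
    · exact .inr ⟨a, a, (pair_eq_singleton a).symm⟩
  · obtain ⟨a, b, -, rfl⟩ := encard_eq_two.mp h2
    exact .inr ⟨a, b, rfl⟩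

section SmallBounds

variable {L : Type*} [Lattice L] {X : Type*} {h : L → Set X}

theorem map_isGLB_eq_biInter_of_mk_lt_three (h_inf : ∀ a b, h (a ⊓ b) = h a ∩ h b)
    (h_top : ∀ a, IsTop a → h a = Set.univ) {S : Set L} {m : L} (hS : #S < 3) (hm : IsGLB S m) :
    h m = ⋂ s ∈ S, h s := by
  rcases eq_empty_or_exists_eq_pair_of_mk_lt_three hS with rfl | ⟨a, b, rfl⟩
  · rw [biInter_empty]
    exact h_top m (isGLB_empty_iff.mp hm)
  · rw [hm.unique isGLB_pair, biInter_pair, h_inf]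

theorem map_isLUB_eq_biUnion_of_mk_lt_three (h_sup : ∀ a b, h (a ⊔ b) = h a ∪ h b)
    (h_bot : ∀ a, IsBot a → h a = ∅) {T : Set L} {j : L} (hT : #T < 3) (hj : IsLUB T j) :
    h j = ⋃ t ∈ T, h t := by
  rcases eq_empty_or_exists_eq_pair_of_mk_lt_three hT with rfl | ⟨a, b, rfl⟩
  · rw [biUnion_empty]
    exact h_bot j (isLUB_empty_iff.mp hj)
  · rw [hj.unique isLUB_pair, biUnion_pair, h_sup]

end SmallBounds

theorem IsABRepresentable.inf_sup_left {α β : Cardinal.{u}} {L : Type u} [Lattice L]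
    (hα : 2 < α) (hβ : 2 < β) (hL : IsABRepresentable α β L) (x y z : L) :
    x ⊓ (y ⊔ z) = x ⊓ y ⊔ x ⊓ z := by
  obtain ⟨X, h, h_le, h_inf, h_sup⟩ := hL
  have h_inj : Function.Injective h := fun a b hab =>
    le_antisymm ((h_le a b).2 hab.le) ((h_le b a).2 hab.ge)
  have map_inf (a b : L) : h (a ⊓ b) = h a ∩ h b := by
    rw [h_inf _ _ ((mk_pair_le_two_s17 a b).trans_lt hα) isGLB_pair, biInter_pair]
  have map_sup (a b : L) : h (a ⊔ b) = h a ∪ h b := by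
    rw [h_sup _ _ ((mk_pair_le_two_s17 a b).trans_lt hβ) isLUB_pair, biUnion_pair]
  apply h_inj
  rw [map_inf, map_sup, map_sup, map_inf, map_inf, inter_union_distrib_left]

namespace Order.Ideal

variable {α : Type*}

def primesAvoiding [Preorder α] (a : α) : Set {I : Ideal α // I.IsPrime} := {I | a ∉ I.1}

section Lattice

variable [Lattice α]

theorem primesAvoiding_sup (a b : α) :
    primesAvoiding (a ⊔ b) = primesAvoiding a ∪ primesAvoiding b := by
  ext I
  simp only [primesAvoiding, mem_ofPred_eq, mem_union, ← not_and_or, sup_mem_iff]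

theorem primesAvoiding_inf (a b : α) :
    primesAvoiding (a ⊓ b) = primesAvoiding a ∩ primesAvoiding b := by
  ext I
  simp only [primesAvoiding, mem_ofPred_eq, mem_inter_iff, ← not_or]
  exact not_congr
    ⟨I.2.mem_or_mem, fun h => h.elim (I.1.lower inf_le_left) (I.1.lower inf_le_right)⟩

theorem primesAvoiding_of_isBot {a : α} (ha : IsBot a) : primesAvoiding a = ∅ :=
  eq_empty_of_forall_notMem fun I haI =>
    haI (I.1.lower (ha I.1.nonempty.some) I.1.nonempty.some_mem)

theorem primesAvoiding_of_isTop {a : α} (ha : IsTop a) : primesAvoiding a = Set.univ :=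
  eq_univ_of_forall fun I haI =>
    I.2.toIsProper.ne_univ (eq_univ_of_forall fun x => I.1.lower (ha x) haI)

end Lattice

theorem primesAvoiding_subset_primesAvoiding_iff [DistribLattice α] {a b : α} :
    primesAvoiding a ⊆ primesAvoiding b ↔ a ≤ b := by
  refine ⟨fun hab => ?_, fun hab I ha hb => ha (I.1.lower hab hb)⟩
  by_contra hab'
  have hdisj : Disjoint (PFilter.principal a : Set α) (principal b : Set α) :=
    disjoint_left.2 fun _ hax hxb => hab' ((PFilter.mem_principal.mp hax).trans hxb)
  obtain ⟨J, hJ, hbJ, haJ⟩ := DistribLattice.prime_ideal_of_disjoint_filter_ideal hdisj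
  exact hab (a := ⟨J, hJ⟩) (disjoint_left.1 haJ (PFilter.mem_principal.mpr le_rfl))
    (hbJ mem_principal_self)

end Order.Ideal

open Order.Ideal in
theorem DistribLattice.isABRepresentable {L : Type u} [DistribLattice L] :
    IsABRepresentable 3 3 L :=
  ⟨_, primesAvoiding, fun _ _ => primesAvoiding_subset_primesAvoiding_iff.symm,
    fun _ _ => map_isGLB_eq_biInter_of_mk_lt_three primesAvoiding_inf
      fun _ => primesAvoiding_of_isTop,
    fun _ _ => map_isLUB_eq_biUnion_of_mk_lt_three primesAvoiding_sup
      fun _ => primesAvoiding_of_isBot⟩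

theorem lattice_representable33_iff_distributive (L : Type u) [Lattice L] :
    IsABRepresentable 3 3 L ↔ ∀ x y z : L, x ⊓ (y ⊔ z) = (x ⊓ y) ⊔ (x ⊓ z) := by
  refine ⟨fun hL => hL.inf_sup_left (by norm_num) (by norm_num), fun hd => ?_⟩
  let : DistribLattice L := DistribLattice.ofInfSupLe fun a b c => (hd a b c).le
  exact DistribLattice.isABRepresentable
end

section
/- Every distributive lattice, regarded as a poset, is (ℵ₀,ℵ₀)-representable. -/
open Cardinal

universe u

/-!
Represent `p` by the set of prime pairs `(I, F)` (an ideal and a filter partitioning `L`) with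
`p ∈ F`. A filter contains the infimum of a finite set as soon as it contains the set, being
directed and nonempty; dually for ideals, and the ideal is the complement of the filter. The
prime ideal theorem for distributive lattices separates `p` from `q` whenever `p ≰ q`.
-/

namespace Order

variable {P : Type*} [Preorder P]

namespace Ideal

theorem exists_mem_upperBounds_of_finite (I : Ideal P) {T : Set P} (hT : T.Finite)
    (hTI : T ⊆ I) : ∃ u ∈ I, u ∈ upperBounds T := by
  induction T, hT using Set.Finite.induction_on with
  | empty =>
    obtain ⟨u, hu⟩ := I.nonempty
    exact ⟨u, hu, by simp⟩
  | @insert a T _ _ ih =>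
    obtain ⟨u, hu, hTu⟩ := ih ((Set.subset_insert a T).trans hTI)
    obtain ⟨v, hv, hav, huv⟩ := I.directed a (hTI (Set.mem_insert a T)) u hu
    exact ⟨v, hv, upperBounds_insert a T ▸ ⟨hav, fun t ht => (hTu ht).trans huv⟩⟩

theorem mem_iff_subset_of_isLUB {I : Ideal P} {T : Set P} {j : P} (hT : T.Finite)
    (hj : IsLUB T j) : j ∈ I ↔ T ⊆ I := by
  refine ⟨fun hjI t ht => I.lower (hj.1 ht) hjI, fun hTI => ?_⟩
  obtain ⟨u, hu, hTu⟩ := I.exists_mem_upperBounds_of_finite hT hTI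
  exact I.lower (hj.2 hTu) hu

namespace PrimePair

theorem mem_F_iff_notMem_I (IF : PrimePair P) {x : P} : x ∈ IF.F ↔ x ∉ IF.I := by
  rw [← SetLike.mem_coe, ← IF.compl_I_eq_F]
  rfl

theorem mem_F_iff_exists_of_isLUB (IF : PrimePair P) {T : Set P} {j : P} (hT : T.Finite)
    (hj : IsLUB T j) : j ∈ IF.F ↔ ∃ t ∈ T, t ∈ IF.F := by
  simp only [mem_F_iff_notMem_I, mem_iff_subset_of_isLUB hT hj, Set.not_subset, SetLike.mem_coe]

end PrimePair

end Ideal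

theorem PFilter.mem_iff_subset_of_isGLB {F : PFilter P} {S : Set P} {m : P} (hS : S.Finite)
    (hm : IsGLB S m) : m ∈ F ↔ S ⊆ F :=
  Ideal.mem_iff_subset_of_isLUB (I := F.dual) (T := OrderDual.ofDual ⁻¹' S) hS hm

end Order

theorem DistribLattice.exists_primePair_of_not_le {α : Type*} [DistribLattice α] {a b : α}
    (hab : ¬a ≤ b) : ∃ IF : Order.Ideal.PrimePair α, a ∈ IF.F ∧ b ∈ IF.I := by
  have hdisj : Disjoint (Order.PFilter.principal a : Set α) (Order.Ideal.principal b) :=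
    Set.disjoint_left.2 fun x hax hxb => hab (le_trans hax hxb)
  obtain ⟨J, hJ, hbJ, haJ⟩ := DistribLattice.prime_ideal_of_disjoint_filter_ideal hdisj
  refine ⟨hJ.toPrimePair, ?_, hbJ Order.Ideal.mem_principal_self⟩
  rw [Order.Ideal.PrimePair.mem_F_iff_notMem_I]
  exact Set.disjoint_left.1 haJ (Order.PFilter.mem_principal.2 le_rfl)

theorem distribLattice_representable_omega (L : Type u) [DistribLattice L] :
    IsABRepresentable ℵ₀ ℵ₀ L := by
  refine ⟨Order.Ideal.PrimePair L, fun p => {IF | p ∈ IF.F}, fun p q => ?_, ?_, ?_⟩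
  · refine ⟨fun hpq IF hp => Order.PFilter.mem_of_le hpq hp, fun h => ?_⟩
    by_contra hpq
    obtain ⟨IF, hp, hq⟩ := DistribLattice.exists_primePair_of_not_le hpq
    exact (IF.mem_F_iff_notMem_I.1 (h hp)) hq
  · intro S m hS hm
    ext IF
    simp [Order.PFilter.mem_iff_subset_of_isGLB (lt_aleph0_iff_set_finite.1 hS) hm, Set.subset_def]
  · intro T j hT hj
    ext IF
    simp [IF.mem_F_iff_exists_of_isLUB (lt_aleph0_iff_set_finite.1 hT) hj]
end
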